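/- arXiv:2206.08580 — 7 statements merged into one kernel-verified Lean document; each statement's English description precedes it below -/
import Mathlib

section
/- Let m ≥ 3 and n ≥ 1. The number of equivalence classes of signatures of the book graph B(m,n) under switching isomorphism is exactly n+1; indeed, the signatures σ_0, σ_1, …, σ_n form a complete set of representatives, i.e., every signature of B(m,n) is switching isomorphic to exactly one σ_l with 0 ≤ l ≤ n. -/
/-!
Switching preserves the sign of every closed walk, in particular of each page cycle
`u u_1^i ⋯ u_{m-2}^i v u`. Switching along the spanning tree formed by `uv` and the paths
`u_1^i ⋯ u_{m-2}^i v` leaves only the edges `u u_1^i` possibly negative, each carrying the sign of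
its page, and permuting the pages puts the negative ones first: this is `σ_l`, with `l` the number
of negative pages. For `n ≥ 2` the vertices `u` and `v` are the only ones of degree more than two,
so an automorphism fixes or swaps them and maps pages to pages (reversed in the second case);
hence the number of negative pages is invariant under switching isomorphism. For `n = 1` the graph
is a single cycle, and `σ_0`, `σ_1` are told apart by balance.
-/

/-- Vertices of the book graph `B(m,n)`: `Sum.inl false` is `u`, `Sum.inl true` is `v`,
and `Sum.inr (i, j)` is the vertex `u_{j+1}^{i+1}`. -/
abbrev BookVertex (m n : ℕ) := Bool ⊕ (Fin n × Fin (m - 2))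

/-- Adjacency relation of the book graph `B(m,n)`. -/
def bookAdj (m n : ℕ) : BookVertex m n → BookVertex m n → Prop
  | Sum.inl a, Sum.inl b => a ≠ b
  | Sum.inl false, Sum.inr (_, j) => j.val = 0
  | Sum.inl true, Sum.inr (_, j) => j.val = m - 3
  | Sum.inr (_, j), Sum.inl false => j.val = 0
  | Sum.inr (_, j), Sum.inl true => j.val = m - 3
  | Sum.inr (i, j), Sum.inr (i', j') => i = i' ∧ (j.val + 1 = j'.val ∨ j'.val + 1 = j.val)

/-- The signature `σ_l` of `B(m,n)`: exactly the edges `u u_1^1, …, u u_1^l` are negative. -/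
def sigmaL (m n l : ℕ) : BookVertex m n → BookVertex m n → ℤ
  | Sum.inl false, Sum.inr (i, j) => if j.val = 0 ∧ i.val < l then -1 else 1
  | Sum.inr (i, j), Sum.inl false => if j.val = 0 ∧ i.val < l then -1 else 1
  | _, _ => 1

/-- The signature of `B^{uv}(m,n)`: exactly the edge `uv` is negative. -/
def sigmaUV (m n : ℕ) : BookVertex m n → BookVertex m n → ℤ
  | Sum.inl _, Sum.inl _ => -1
  | _, _ => 1

/-- `γ_m(x) = ∑_{i=0}^{m-2} (-1)^i (x-1)^{m-2-i}`. -/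
def gammaP (m : ℕ) (x : ℤ) : ℤ := ∑ i ∈ Finset.range (m - 1), (-1) ^ i * (x - 1) ^ (m - 2 - i)

/-- Two signatures `σ, τ` of `B(m,n)` are switching isomorphic if there are a graph
automorphism `ψ` and a switching function `s : V → {±1}` with
`τ(ψ x, ψ y) = s x · σ x y · s y` on every edge. -/
def SwitchIso (m n : ℕ) (σ τ : BookVertex m n → BookVertex m n → ℤ) : Prop :=
  ∃ ψ : BookVertex m n ≃ BookVertex m n,
    (∀ x y, bookAdj m n x y ↔ bookAdj m n (ψ x) (ψ y)) ∧
    ∃ s : BookVertex m n → ℤ, (∀ x, s x = 1 ∨ s x = -1) ∧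
      ∀ x y, bookAdj m n x y → τ (ψ x) (ψ y) = s x * σ x y * s y

lemma Finset.prod_range_mul_mul_succ_of_mul_self_eq_one {R : Type*} [CommRing R]
    (g a : ℕ → R) (hg : ∀ k, g k * g k = 1) (N : ℕ) :
    ∏ k ∈ Finset.range N, (g k * a k * g (k + 1)) = g 0 * (∏ k ∈ Finset.range N, a k) * g N := by
  induction N with
  | zero => simp [hg 0]
  | succ N ih =>
    rw [Finset.prod_range_succ, ih, Finset.prod_range_succ]
    linear_combination (g 0 * (∏ k ∈ Finset.range N, a k) * a N * g (N + 1)) * hg N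

lemma Equiv.exists_perm_iff_of_card_eq {α : Type*} [Fintype α] {p q : α → Prop}
    [DecidablePred p] [DecidablePred q]
    (h : Fintype.card {x // p x} = Fintype.card {x // q x}) :
    ∃ π : Equiv.Perm α, ∀ a, q (π a) ↔ p a := by
  have hc : Fintype.card {x // ¬p x} = Fintype.card {x // ¬q x} := by
    rw [Fintype.card_subtype_compl, Fintype.card_subtype_compl, h]
  refine ⟨Equiv.subtypeCongr (Fintype.equivOfCardEq h) (Fintype.equivOfCardEq hc), fun a => ?_⟩
  by_cases ha : p a
  · simpa [Equiv.subtypeCongr, ha] using (Fintype.equivOfCardEq h ⟨a, ha⟩).2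
  · simpa [Equiv.subtypeCongr, ha] using (Fintype.equivOfCardEq hc ⟨a, ha⟩).2

section ClosedWalk

variable {V : Type*}

def closedWalkSign (σ : V → V → ℤ) (w : ℕ → V) (N : ℕ) : ℤ :=
  σ (w N) (w 0) * ∏ k ∈ Finset.range N, σ (w k) (w (k + 1))

lemma closedWalkSign_switch {Adj : V → V → Prop} {σ τ : V → V → ℤ} {s : V → ℤ}
    (hs : ∀ x, s x = 1 ∨ s x = -1) (h : ∀ x y, Adj x y → τ x y = s x * σ x y * s y)
    {w : ℕ → V} {N : ℕ} (hw : ∀ k < N, Adj (w k) (w (k + 1))) (hclose : Adj (w N) (w 0)) :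
    closedWalkSign τ w N = closedWalkSign σ w N := by
  have hss : ∀ x, s x * s x = 1 := fun x => mul_self_eq_one_iff.mpr (hs x)
  have hprod : ∏ k ∈ Finset.range N, τ (w k) (w (k + 1)) =
      s (w 0) * (∏ k ∈ Finset.range N, σ (w k) (w (k + 1))) * s (w N) := by
    rw [← Finset.prod_range_mul_mul_succ_of_mul_self_eq_one (fun k => s (w k)) _
      (fun k => hss _)]
    exact Finset.prod_congr rfl fun k hk => h _ _ (hw k (Finset.mem_range.mp hk))
  rw [closedWalkSign, closedWalkSign, hprod, h _ _ hclose]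
  linear_combination (σ (w N) (w 0) * (∏ k ∈ Finset.range N, σ (w k) (w (k + 1)))) *
    (s (w 0) * s (w 0) * hss (w N) + hss (w 0))

lemma closedWalkSign_reverse {σ : V → V → ℤ} (hσ : ∀ x y, σ x y = σ y x) (w : ℕ → V) (N : ℕ) :
    closedWalkSign σ (fun k => w (N - k)) N = closedWalkSign σ w N := by
  rw [closedWalkSign, closedWalkSign, Nat.sub_self, Nat.sub_zero, hσ (w 0),
    ← Finset.prod_range_reflect (fun k => σ (w k) (w (k + 1)))]
  congr 1
  refine Finset.prod_congr rfl fun k hk => ?_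
  have hk := Finset.mem_range.mp hk
  rw [hσ, show N - 1 - k + 1 = N - k by omega, show N - 1 - k = N - (k + 1) by omega]

end ClosedWalk

namespace Book

variable {m n : ℕ}

lemma bookAdj_apex : bookAdj m n (Sum.inl false) (Sum.inl true) := Bool.false_ne_true

lemma sigmaL_symm (l : ℕ) (x y : BookVertex m n) : sigmaL m n l x y = sigmaL m n l y x := by
  rcases x with (_ | _) | ⟨i, j⟩ <;> rcases y with (_ | _) | ⟨i', j'⟩ <;> rfl

/-- The `k`-th vertex of the path `u, u_1^i, …, u_{m-2}^i, v` along page `i`; every `k ≥ m - 1`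
gives `v`. -/
def pagePt (m : ℕ) {n : ℕ} (i : Fin n) (k : ℕ) : BookVertex m n :=
  if k = 0 then Sum.inl false
  else if h : k - 1 < m - 2 then Sum.inr (i, ⟨k - 1, h⟩) else Sum.inl true

@[simp]
lemma pagePt_zero (i : Fin n) : pagePt m i 0 = Sum.inl false := rfl

lemma pagePt_eq_inr (i : Fin n) (j : Fin (m - 2)) {k : ℕ} (hk : k = j + 1) :
    pagePt m i k = Sum.inr (i, j) := by
  simp [pagePt, hk]

lemma pagePt_of_le (hm : 2 ≤ m) (i : Fin n) {k : ℕ} (hk : m - 1 ≤ k) :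
    pagePt m i k = Sum.inl true := by
  rw [pagePt, if_neg (by omega), dif_neg (by omega)]

lemma bookAdj_pagePt (hm : 3 ≤ m) (i : Fin n) {k : ℕ} (hk : k < m - 1) :
    bookAdj m n (pagePt m i k) (pagePt m i (k + 1)) := by
  unfold pagePt
  split_ifs <;> simp_all [bookAdj] <;> omega

lemma bookAdj_pagePt_last (hm : 2 ≤ m) (i : Fin n) :
    bookAdj m n (pagePt m i (m - 1)) (pagePt m i 0) := by
  simp [pagePt_of_le hm i le_rfl, bookAdj]

def pageSign (σ : BookVertex m n → BookVertex m n → ℤ) (i : Fin n) : ℤ :=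
  closedWalkSign σ (pagePt m i) (m - 1)

def negPageCount (σ : BookVertex m n → BookVertex m n → ℤ) : ℕ :=
  Fintype.card {i : Fin n // pageSign σ i = -1}

lemma negPageCount_le (σ : BookVertex m n → BookVertex m n → ℤ) : negPageCount σ ≤ n :=
  (Fintype.card_subtype_le _).trans_eq (Fintype.card_fin n)

lemma pageSign_switch (hm : 3 ≤ m) {σ τ : BookVertex m n → BookVertex m n → ℤ}
    {s : BookVertex m n → ℤ} (hs : ∀ x, s x = 1 ∨ s x = -1)
    (h : ∀ x y, bookAdj m n x y → τ x y = s x * σ x y * s y) (i : Fin n) :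
    pageSign τ i = pageSign σ i :=
  closedWalkSign_switch hs h (fun _ hk => bookAdj_pagePt hm i hk)
    (bookAdj_pagePt_last (by omega) i)

lemma sigmaL_pagePt (hm : 3 ≤ m) (l : ℕ) (i : Fin n) (k : ℕ) :
    sigmaL m n l (pagePt m i k) (pagePt m i (k + 1)) = if k = 0 ∧ i.val < l then -1 else 1 := by
  unfold pagePt
  split_ifs <;> simp_all [sigmaL]; omega

lemma pageSign_sigmaL (hm : 3 ≤ m) (l : ℕ) (i : Fin n) :
    pageSign (sigmaL m n l) i = if i.val < l then -1 else 1 := by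
  rw [pageSign, closedWalkSign, pagePt_of_le (by omega) i le_rfl,
    Finset.prod_congr rfl fun k _ => sigmaL_pagePt hm l i k,
    show m - 1 = m - 2 + 1 by omega, Finset.prod_range_succ']
  simp [sigmaL]

lemma negPageCount_sigmaL (hm : 3 ≤ m) {l : ℕ} (hl : l ≤ n) :
    negPageCount (sigmaL m n l) = l := by
  refine (Fintype.card_congr (Equiv.subtypeEquivRight fun i => ?_)).trans
    (Fintype.card_fin_lt_of_le hl)
  rw [pageSign_sigmaL hm]
  split_ifs <;> simp_all

lemma forall_bookAdj {P : BookVertex m n → BookVertex m n → Prop} (hP : ∀ x y, P x y → P y x)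
    (huv : P (Sum.inl false) (Sum.inl true))
    (hpage : ∀ i k, k < m - 1 → P (pagePt m i k) (pagePt m i (k + 1))) :
    ∀ x y, bookAdj m n x y → P x y := by
  have hlast : ∀ i (j : Fin (m - 2)), j.val = m - 3 → P (Sum.inr (i, j)) (Sum.inl true) := by
    intro i j hj
    have := hpage i (j + 1) (by omega)
    rwa [pagePt_eq_inr i j rfl, pagePt_of_le (by omega) i (by omega)] at this
  rintro ((_ | _) | ⟨i, j⟩) ((_ | _) | ⟨i', j'⟩) h <;> simp only [bookAdj] at h
  · exact absurd rfl h
  · exact huv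
  · have := hpage i' 0 (by omega)
    rwa [pagePt_zero, pagePt_eq_inr i' j' (by omega)] at this
  · exact hP _ _ huv
  · exact absurd rfl h
  · exact hP _ _ (hlast i' j' h)
  · have := hpage i 0 (by omega)
    exact hP _ _ (by rwa [pagePt_zero, pagePt_eq_inr i j (by omega)] at this)
  · exact hlast i j h
  · obtain ⟨rfl, h | h⟩ := h
    · have := hpage i (j + 1) (by omega)
      rwa [pagePt_eq_inr i j rfl, pagePt_eq_inr i j' (by omega)] at this
    · have := hpage i (j' + 1) (by omega)
      exact hP _ _ (by rwa [pagePt_eq_inr i j' rfl, pagePt_eq_inr i j (by omega)] at this)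

def IsBookAut (ψ : BookVertex m n ≃ BookVertex m n) : Prop :=
  ∀ x y, bookAdj m n x y ↔ bookAdj m n (ψ x) (ψ y)

def pagePerm (π : Equiv.Perm (Fin n)) : BookVertex m n ≃ BookVertex m n :=
  Equiv.sumCongr (Equiv.refl Bool) (Equiv.prodCongr π (Equiv.refl (Fin (m - 2))))

lemma isBookAut_pagePerm (π : Equiv.Perm (Fin n)) : IsBookAut (pagePerm (m := m) π) := by
  rintro ((_ | _) | ⟨i, j⟩) ((_ | _) | ⟨i', j'⟩) <;> simp [pagePerm, bookAdj]

lemma pagePerm_pagePt (π : Equiv.Perm (Fin n)) (i : Fin n) (k : ℕ) :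
    pagePerm π (pagePt m i k) = pagePt m (π i) k := by
  unfold pagePt
  split_ifs <;> rfl

lemma pageSign_eq_one_or_neg_one (hm : 3 ≤ m) {σ : BookVertex m n → BookVertex m n → ℤ}
    (hσsign : ∀ x y, bookAdj m n x y → σ x y = 1 ∨ σ x y = -1) (i : Fin n) :
    pageSign σ i = 1 ∨ pageSign σ i = -1 := by
  rw [← Int.isUnit_iff, pageSign, closedWalkSign]
  refine (Int.isUnit_iff.mpr (hσsign _ _ (bookAdj_pagePt_last (by omega) i))).mul
    (IsUnit.prod_iff.mpr fun k hk => Int.isUnit_iff.mpr (hσsign _ _ ?_))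
  exact bookAdj_pagePt hm i (Finset.mem_range.mp hk)

/-- The switching that makes positive every edge of the spanning tree formed by `uv` and the
paths `u_1^i ⋯ u_{m-2}^i v`. -/
def treeSwitch (σ : BookVertex m n → BookVertex m n → ℤ) : BookVertex m n → ℤ
  | Sum.inl false => 1
  | Sum.inl true => σ (Sum.inl false) (Sum.inl true)
  | Sum.inr (i, j) => σ (Sum.inl false) (Sum.inl true) *
      ∏ k ∈ Finset.Ico (j.val + 1) (m - 1), σ (pagePt m i k) (pagePt m i (k + 1))

section treeSwitch

variable {σ : BookVertex m n → BookVertex m n → ℤ}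

lemma treeSwitch_eq_one_or_neg_one (hm : 3 ≤ m)
    (hσsign : ∀ x y, bookAdj m n x y → σ x y = 1 ∨ σ x y = -1) (x : BookVertex m n) :
    treeSwitch σ x = 1 ∨ treeSwitch σ x = -1 := by
  rcases x with (_ | _) | ⟨i, j⟩
  · exact Or.inl rfl
  · exact hσsign _ _ bookAdj_apex
  · rw [← Int.isUnit_iff]
    refine (Int.isUnit_iff.mpr (hσsign _ _ bookAdj_apex)).mul
      (IsUnit.prod_iff.mpr fun k hk => Int.isUnit_iff.mpr (hσsign _ _ ?_))
    exact bookAdj_pagePt hm i (Finset.mem_Ico.mp hk).2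

lemma treeSwitch_pagePt (hm : 2 ≤ m) (i : Fin n) {k : ℕ} (hk : 1 ≤ k) (hk' : k ≤ m - 1) :
    treeSwitch σ (pagePt m i k) = σ (Sum.inl false) (Sum.inl true) *
      ∏ j ∈ Finset.Ico k (m - 1), σ (pagePt m i j) (pagePt m i (j + 1)) := by
  rcases hk'.lt_or_eq with hlt | rfl
  · rw [pagePt_eq_inr i ⟨k - 1, by omega⟩ (by simp only; omega)]
    simp only [treeSwitch, Nat.sub_add_cancel hk]
  · rw [pagePt_of_le hm i le_rfl, Finset.Ico_self, Finset.prod_empty, mul_one]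
    rfl

lemma treeSwitch_mul_mul_pagePt (hm : 3 ≤ m) (hσsym : ∀ x y, σ x y = σ y x)
    (hσsign : ∀ x y, bookAdj m n x y → σ x y = 1 ∨ σ x y = -1) (i : Fin n) {k : ℕ}
    (hk : k < m - 1) :
    treeSwitch σ (pagePt m i k) * σ (pagePt m i k) (pagePt m i (k + 1)) *
      treeSwitch σ (pagePt m i (k + 1)) = if k = 0 then pageSign σ i else 1 := by
  rcases Nat.eq_zero_or_pos k with rfl | hk0
  · rw [if_pos rfl, treeSwitch_pagePt (by omega) i le_rfl (by omega), pageSign, closedWalkSign,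
      Finset.range_eq_Ico, Finset.prod_eq_prod_Ico_succ_bot (a := 0) (by omega),
      pagePt_of_le (by omega) i le_rfl, pagePt_zero, hσsym (Sum.inl true)]
    simp only [treeSwitch]
    ring
  · have hrec : treeSwitch σ (pagePt m i k) =
        σ (pagePt m i k) (pagePt m i (k + 1)) * treeSwitch σ (pagePt m i (k + 1)) := by
      rw [treeSwitch_pagePt (by omega) i hk0 hk.le, treeSwitch_pagePt (by omega) i (by omega) hk,
        Finset.prod_eq_prod_Ico_succ_bot hk]
      ring
    have he := mul_self_eq_one_iff.mpr (hσsign _ _ (bookAdj_pagePt hm i hk))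
    have hs := mul_self_eq_one_iff.mpr
      (treeSwitch_eq_one_or_neg_one hm hσsign (pagePt m i (k + 1)))
    rw [if_neg hk0.ne', hrec]
    linear_combination (σ (pagePt m i k) (pagePt m i (k + 1)) *
      σ (pagePt m i k) (pagePt m i (k + 1))) * hs + he

end treeSwitch

theorem switchIso_sigmaL_negPageCount (hm : 3 ≤ m) {σ : BookVertex m n → BookVertex m n → ℤ}
    (hσsym : ∀ x y, σ x y = σ y x)
    (hσsign : ∀ x y, bookAdj m n x y → σ x y = 1 ∨ σ x y = -1) :
    SwitchIso m n σ (sigmaL m n (negPageCount σ)) := by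
  obtain ⟨π, hπ⟩ := Equiv.exists_perm_iff_of_card_eq (p := fun i => pageSign σ i = -1)
    (q := fun i : Fin n => i.val < negPageCount σ)
    (Fintype.card_fin_lt_of_le (negPageCount_le σ)).symm
  refine ⟨pagePerm π, isBookAut_pagePerm π, treeSwitch σ,
    treeSwitch_eq_one_or_neg_one hm hσsign, forall_bookAdj (fun x y h => ?_) ?_ fun i k hk => ?_⟩
  · rw [sigmaL_symm, h, hσsym]
    ring
  · have := mul_self_eq_one_iff.mpr (hσsign _ _ bookAdj_apex)
    simpa [pagePerm, sigmaL, treeSwitch] using this.symm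
  · rw [pagePerm_pagePt, pagePerm_pagePt, sigmaL_pagePt hm,
      treeSwitch_mul_mul_pagePt hm hσsym hσsign i hk]
    rcases Nat.eq_zero_or_pos k with rfl | hk0
    · simp only [true_and, if_true, hπ]
      rcases pageSign_eq_one_or_neg_one hm hσsign i with h | h <;> simp [h]
    · simp [hk0.ne']

lemma IsBookAut.trans {ψ φ : BookVertex m n ≃ BookVertex m n} (hψ : IsBookAut ψ)
    (hφ : IsBookAut φ) : IsBookAut (ψ.trans φ) :=
  fun x y => (hψ x y).trans (hφ _ _)

def bookReflect : BookVertex m n ≃ BookVertex m n :=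
  Equiv.sumCongr Equiv.boolNot (Equiv.prodCongr (Equiv.refl (Fin n)) Fin.revPerm)

lemma bookReflect_bookReflect (x : BookVertex m n) : bookReflect (bookReflect x) = x := by
  rcases x with (_ | _) | ⟨i, j⟩ <;> simp [bookReflect, Equiv.boolNot]

lemma isBookAut_bookReflect : IsBookAut (bookReflect (m := m) (n := n)) := by
  rintro ((_ | _) | ⟨i, j⟩) ((_ | _) | ⟨i', j'⟩) <;>
    simp [bookReflect, bookAdj, Equiv.boolNot, Fin.rev] <;> omega

lemma bookReflect_pagePt (hm : 2 ≤ m) (i : Fin n) (k : ℕ) :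
    bookReflect (pagePt m i k) = pagePt m i (m - 1 - k) := by
  unfold pagePt
  split_ifs <;> simp_all [bookReflect, Equiv.boolNot, Fin.rev] <;> omega

lemma pageSign_comp_bookReflect (hm : 2 ≤ m) {τ : BookVertex m n → BookVertex m n → ℤ}
    (hτ : ∀ x y, τ x y = τ y x) (i : Fin n) :
    pageSign (fun x y => τ (bookReflect x) (bookReflect y)) i = pageSign τ i := by
  change closedWalkSign τ (fun k => bookReflect (pagePt m i k)) (m - 1) = _
  simp only [bookReflect_pagePt hm]
  exact closedWalkSign_reverse hτ _ _

lemma negPageCount_comp_bookReflect (hm : 2 ≤ m) {τ : BookVertex m n → BookVertex m n → ℤ}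
    (hτ : ∀ x y, τ x y = τ y x) :
    negPageCount (fun x y => τ (bookReflect x) (bookReflect y)) = negPageCount τ :=
  Fintype.card_congr (Equiv.subtypeEquivRight fun i => by rw [pageSign_comp_bookReflect hm hτ])

lemma eq_of_bookAdj_apex {x : BookVertex m n} (h : bookAdj m n (Sum.inl false) x) :
    x = Sum.inl true ∨ ∃ i, x = pagePt m i 1 := by
  rcases x with (_ | _) | ⟨i, j⟩
  · exact absurd rfl h
  · exact Or.inl rfl
  · exact Or.inr ⟨i, (pagePt_eq_inr i j (by simp only [bookAdj] at h; omega)).symm⟩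

lemma eq_of_bookAdj_pagePt {i : Fin n} {k : ℕ} (hk : k < m - 2) {x : BookVertex m n}
    (h : bookAdj m n (pagePt m i (k + 1)) x) : x = pagePt m i k ∨ x = pagePt m i (k + 2) := by
  rw [pagePt_eq_inr i ⟨k, hk⟩ rfl] at h
  rcases x with (_ | _) | ⟨i', j'⟩ <;> simp only [bookAdj] at h
  · exact Or.inl (by rw [h, pagePt_zero])
  · exact Or.inr (pagePt_of_le (by omega) i (by omega)).symm
  · obtain ⟨rfl, h | h⟩ := h
    · exact Or.inr (pagePt_eq_inr i j' (by omega)).symm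
    · exact Or.inl (pagePt_eq_inr i j' (by omega)).symm

lemma pagePt_add_two_ne (i : Fin n) {k : ℕ} (hk : k + 2 ≤ m - 1) :
    pagePt m i (k + 2) ≠ pagePt m i k := by
  unfold pagePt
  split_ifs <;> simp_all <;> omega

lemma map_apex_eq_or (hn : 2 ≤ n) {φ : BookVertex m n ≃ BookVertex m n} (hφ : IsBookAut φ) :
    φ (Sum.inl false) = Sum.inl false ∨ φ (Sum.inl false) = Sum.inl true := by
  rcases hu : φ (Sum.inl false) with (_ | _) | ⟨i, j⟩
  · exact Or.inl rfl
  · exact Or.inr rfl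
  exfalso
  have hj := j.isLt
  have hnbr : ∀ x, bookAdj m n (Sum.inl false) x →
      φ x = pagePt m i j ∨ φ x = pagePt m i (j + 2) := fun x hx =>
    eq_of_bookAdj_pagePt hj (by rw [pagePt_eq_inr i j rfl, ← hu]; exact (hφ _ _).mp hx)
  -- `u` has the three neighbours `v`, `u_1^1`, `u_1^2`, but `φ u` has only two
  let x₀ : BookVertex m n := Sum.inr (⟨0, by omega⟩, ⟨0, by omega⟩)
  let x₁ : BookVertex m n := Sum.inr (⟨1, by omega⟩, ⟨0, by omega⟩)
  have h₀₁ : φ x₀ ≠ φ x₁ := φ.injective.ne (by simp [x₀, x₁])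
  have hv₀ : φ (Sum.inl true) ≠ φ x₀ := φ.injective.ne (by simp [x₀])
  have hv₁ : φ (Sum.inl true) ≠ φ x₁ := φ.injective.ne (by simp [x₁])
  rcases hnbr _ bookAdj_apex with hv | hv <;> rcases hnbr x₀ rfl with h₀ | h₀ <;>
    rcases hnbr x₁ rfl with h₁ | h₁ <;> simp_all

lemma exists_map_pagePt (hm : 3 ≤ m) {φ : BookVertex m n ≃ BookVertex m n} (hφ : IsBookAut φ)
    (hu : φ (Sum.inl false) = Sum.inl false) (hv : φ (Sum.inl true) = Sum.inl true) (i : Fin n) :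
    ∃ i', ∀ k, φ (pagePt m i k) = pagePt m i' k := by
  obtain ⟨i', hi'⟩ : ∃ i', φ (pagePt m i 1) = pagePt m i' 1 := by
    have h := (hφ _ _).mp (bookAdj_pagePt hm i (k := 0) (by omega))
    rw [pagePt_zero, hu] at h
    refine (eq_of_bookAdj_apex h).resolve_left fun h' => ?_
    have := φ.injective (h'.trans hv.symm)
    rw [pagePt_eq_inr i ⟨0, by omega⟩ rfl] at this
    exact Sum.inr_ne_inl this
  have hstep : ∀ k, k + 1 ≤ m - 1 →
      φ (pagePt m i k) = pagePt m i' k ∧ φ (pagePt m i (k + 1)) = pagePt m i' (k + 1) := by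
    intro k
    induction k with
    | zero => exact fun _ => ⟨hu, hi'⟩
    | succ k ih =>
      intro hk
      obtain ⟨hk₀, hk₁⟩ := ih (by omega)
      refine ⟨hk₁, ?_⟩
      have h := (hφ _ _).mp (bookAdj_pagePt hm i (k := k + 1) (by omega))
      rw [hk₁] at h
      refine (eq_of_bookAdj_pagePt (by omega) h).resolve_left fun h' => ?_
      exact pagePt_add_two_ne i (by omega) (φ.injective (h'.trans hk₀.symm))
  refine ⟨i', fun k => ?_⟩
  rcases Nat.lt_or_ge k (m - 1) with hk | hk
  · exact (hstep k hk).1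
  · rw [pagePt_of_le (by omega) i hk, pagePt_of_le (by omega) i' hk, hv]

lemma negPageCount_eq_of_map_apex (hm : 3 ≤ m) {σ τ : BookVertex m n → BookVertex m n → ℤ}
    {φ : BookVertex m n ≃ BookVertex m n} (hφ : IsBookAut φ)
    (hu : φ (Sum.inl false) = Sum.inl false) (hv : φ (Sum.inl true) = Sum.inl true)
    {s : BookVertex m n → ℤ} (hs : ∀ x, s x = 1 ∨ s x = -1)
    (h : ∀ x y, bookAdj m n x y → τ (φ x) (φ y) = s x * σ x y * s y) :
    negPageCount σ = negPageCount τ := by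
  choose f hf using exists_map_pagePt hm hφ hu hv
  have hsign : ∀ i, pageSign τ (f i) = pageSign σ i := fun i => by
    rw [← pageSign_switch hm hs h i]
    simp only [pageSign, closedWalkSign, hf]
  have hinj : Function.Injective f := fun i i' he => by
    have := φ.injective ((hf i 1).trans (he ▸ (hf i' 1).symm))
    rw [pagePt_eq_inr i ⟨0, by omega⟩ rfl, pagePt_eq_inr i' ⟨0, by omega⟩ rfl] at this
    simpa using this
  exact Fintype.card_congr ((Equiv.ofBijective f hinj.bijective_of_finite).subtypeEquiv
    fun i => by rw [Equiv.ofBijective_apply, hsign])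

theorem negPageCount_eq_of_switchIso (hm : 3 ≤ m) (hn : 2 ≤ n)
    {σ τ : BookVertex m n → BookVertex m n → ℤ} (hτ : ∀ x y, τ x y = τ y x)
    (h : SwitchIso m n σ τ) : negPageCount σ = negPageCount τ := by
  obtain ⟨ψ, hψ : IsBookAut ψ, s, hs, hst⟩ := h
  -- `bookReflect.trans ψ` sends `u` to `ψ v`
  have hv : ψ (Sum.inl true) = Sum.inl false ∨ ψ (Sum.inl true) = Sum.inl true :=
    map_apex_eq_or hn (isBookAut_bookReflect.trans hψ)
  have hne : ψ (Sum.inl true) ≠ ψ (Sum.inl false) := ψ.injective.ne (by simp)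
  rcases map_apex_eq_or hn hψ with hu | hu
  · exact negPageCount_eq_of_map_apex hm hψ hu (hv.resolve_left (hu ▸ hne)) hs hst
  · rw [← negPageCount_comp_bookReflect (by omega) hτ]
    refine negPageCount_eq_of_map_apex hm (hψ.trans isBookAut_bookReflect) ?_ ?_ hs
      fun x y hxy => by
        simpa only [Equiv.trans_apply, bookReflect_bookReflect] using hst x y hxy
    · simp [hu, bookReflect, Equiv.boolNot]
    · simp [hv.resolve_right (hu ▸ hne), bookReflect, Equiv.boolNot]

def IsBalanced (σ : BookVertex m n → BookVertex m n → ℤ) : Prop :=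
  ∃ t : BookVertex m n → ℤ, (∀ x, t x = 1 ∨ t x = -1) ∧
    ∀ x y, bookAdj m n x y → σ x y = t x * t y

lemma IsBalanced.of_switchIso {σ τ : BookVertex m n → BookVertex m n → ℤ}
    (h : SwitchIso m n σ τ) (hτ : IsBalanced τ) : IsBalanced σ := by
  obtain ⟨ψ, hψ, s, hs, hst⟩ := h
  obtain ⟨t, ht, htv⟩ := hτ
  refine ⟨fun x => s x * t (ψ x), fun x => Int.isUnit_iff.mp
    ((Int.isUnit_iff.mpr (hs x)).mul (Int.isUnit_iff.mpr (ht _))), fun x y hxy => ?_⟩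
  have hx := mul_self_eq_one_iff.mpr (hs x)
  have hy := mul_self_eq_one_iff.mpr (hs y)
  have e := hst x y hxy
  rw [htv _ _ ((hψ x y).mp hxy)] at e
  linear_combination (-(s x * s y)) * e - σ x y * s y * s y * hx - σ x y * hy

lemma IsBalanced.switchIso {σ τ : BookVertex m n → BookVertex m n → ℤ}
    (h : SwitchIso m n σ τ) (hσ : IsBalanced σ) : IsBalanced τ := by
  obtain ⟨ψ, hψ, s, hs, hst⟩ := h
  obtain ⟨t, ht, htv⟩ := hσ
  refine ⟨fun z => s (ψ.symm z) * t (ψ.symm z), fun z => Int.isUnit_iff.mp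
    ((Int.isUnit_iff.mpr (hs _)).mul (Int.isUnit_iff.mpr (ht _))), fun z w hzw => ?_⟩
  have hadj : bookAdj m n (ψ.symm z) (ψ.symm w) := by
    rwa [hψ, Equiv.apply_symm_apply, Equiv.apply_symm_apply]
  have e := hst _ _ hadj
  rw [Equiv.apply_symm_apply, Equiv.apply_symm_apply, htv _ _ hadj] at e
  rw [e]
  ring

lemma isBalanced_sigmaL_zero : IsBalanced (sigmaL m n 0) := by
  refine ⟨fun _ => 1, fun _ => Or.inl rfl, fun x y _ => ?_⟩
  rcases x with (_ | _) | ⟨i, j⟩ <;> rcases y with (_ | _) | ⟨i', j'⟩ <;> simp [sigmaL]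

lemma not_isBalanced_sigmaL_one (hm : 3 ≤ m) (hn : 1 ≤ n) : ¬ IsBalanced (sigmaL m n 1) := by
  rintro ⟨t, ht, htv⟩
  have h := pageSign_switch hm (σ := fun _ _ => 1) (τ := sigmaL m n 1) ht
    (fun x y hxy => by rw [htv x y hxy]; ring) ⟨0, hn⟩
  rw [pageSign_sigmaL hm] at h
  simp [pageSign, closedWalkSign] at h

lemma eq_of_switchIso_sigmaL_of_le_one (hm : 3 ≤ m) (hn : 1 ≤ n)
    {σ : BookVertex m n → BookVertex m n → ℤ} {l l' : ℕ} (hl : l ≤ 1) (hl' : l' ≤ 1)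
    (h : SwitchIso m n σ (sigmaL m n l)) (h' : SwitchIso m n σ (sigmaL m n l')) : l = l' := by
  by_contra hne
  obtain ⟨h₀, h₁⟩ : SwitchIso m n σ (sigmaL m n 0) ∧ SwitchIso m n σ (sigmaL m n 1) := by
    rcases (by omega : l = 0 ∧ l' = 1 ∨ l = 1 ∧ l' = 0) with ⟨rfl, rfl⟩ | ⟨rfl, rfl⟩
    exacts [⟨h, h'⟩, ⟨h', h⟩]
  exact not_isBalanced_sigmaL_one hm hn ((isBalanced_sigmaL_zero.of_switchIso h₀).switchIso h₁)

end Book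

/-- Every signature of `B(m,n)` is switching isomorphic to exactly one of the
`n+1` signatures `σ_0, σ_1, …, σ_n`; in particular the number of switching
isomorphism classes of signed `B(m,n)` is `n+1`. -/
theorem statement1 (m n : ℕ) (hm : 3 ≤ m) (hn : 1 ≤ n)
    (σ : BookVertex m n → BookVertex m n → ℤ)
    (hσsym : ∀ x y, σ x y = σ y x)
    (hσsign : ∀ x y, bookAdj m n x y → σ x y = 1 ∨ σ x y = -1) :
    ∃! l : ℕ, l ≤ n ∧ SwitchIso m n σ (sigmaL m n l) := by
  have hex := Book.switchIso_sigmaL_negPageCount hm hσsym hσsign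
  refine ⟨Book.negPageCount σ, ⟨Book.negPageCount_le σ, hex⟩, fun l ⟨hl, hiso⟩ => ?_⟩
  rcases Nat.lt_or_ge n 2 with hn1 | hn2
  · exact Book.eq_of_switchIso_sigmaL_of_le_one hm hn (by omega)
      ((Book.negPageCount_le σ).trans (by omega)) hiso hex
  · rw [Book.negPageCount_eq_of_switchIso hm hn2 (Book.sigmaL_symm l) hiso,
      Book.negPageCount_sigmaL hm hl]
end

section
/- Let m ≥ 3, n ≥ 2, and 0 ≤ l ≤ n. The chromatic number of the signed book graph (B(m,n), σ_l) equals 2 if (m is odd and l = n) or (m is even and l = 0), and equals 3 in all other cases. -/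
/-- `c` is a proper coloring of the signed graph `(B(m,n), σ)`. -/
def IsProperColoring (m n : ℕ) (σ : BookVertex m n → BookVertex m n → ℤ)
    (c : BookVertex m n → ℤ) : Prop :=
  ∀ x y, bookAdj m n x y → c x ≠ σ x y * c y

lemma three_coloring' (m n l : ℕ) :
    IsProperColoring m n (sigmaL m n l)
      (fun x => match x with
        | Sum.inl false => 1
        | Sum.inl true => -1
        | Sum.inr (_, j) => if j.val % 2 = 0 then 0 else 1) := by
  intro x y hxy
  rcases x with (_|_) | ⟨i, j⟩ <;> rcases y with (_|_) | ⟨i', j'⟩ <;>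
    simp only [bookAdj, sigmaL] at hxy ⊢
  · exact absurd rfl hxy
  · norm_num
  · split <;> simp [hxy]
  · norm_num
  · exact absurd rfl hxy
  · split <;> omega
  · simp only [hxy]; split <;> split <;> simp_all
  · split <;> omega
  · obtain ⟨-, hj⟩ := hxy
    rcases hj with h | h <;> split <;> split <;> omega

lemma no_two (m n l : ℕ) (hm : 3 ≤ m) (hn : 2 ≤ n) (hl : l ≤ n)
    (hbad : ¬((Odd m ∧ l = n) ∨ (Even m ∧ l = 0)))
    (c : BookVertex m n → ℤ) (hpm : ∀ x, c x = 1 ∨ c x = -1)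
    (hc : IsProperColoring m n (sigmaL m n l) c) : False := by
  have h0 : 0 < m - 2 := by omega
  have hlast : m - 3 < m - 2 := by omega
  have neg_of_ne : ∀ a b : ℤ, (a = 1 ∨ a = -1) → (b = 1 ∨ b = -1) → a ≠ b → a = -b := by
    rintro a b (rfl|rfl) (rfl|rfl) h <;> omega
  have key : ∀ (i : Fin n) (jv : ℕ) (h : jv < m - 2),
      c (Sum.inr (i, ⟨jv, h⟩)) = (-1) ^ jv * c (Sum.inr (i, ⟨0, h0⟩)) := by
    intro i jv
    induction jv with
    | zero => intro h; simp
    | succ k ih =>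
      intro h
      have hk : k < m - 2 := by omega
      have adj : bookAdj m n (Sum.inr (i, ⟨k, hk⟩)) (Sum.inr (i, ⟨k+1, h⟩)) :=
        ⟨rfl, Or.inl rfl⟩
      have hne := hc _ _ adj
      have hσ : sigmaL m n l (Sum.inr (i, ⟨k, hk⟩)) (Sum.inr (i, ⟨k+1, h⟩)) = 1 := rfl
      rw [hσ, one_mul] at hne
      have h2 : c (Sum.inr (i, ⟨k+1, h⟩)) = - c (Sum.inr (i, ⟨k, hk⟩)) := by
        have := neg_of_ne _ _ (hpm _) (hpm _) hne
        omega
      rw [h2, ih hk]; ring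
  rcases Nat.even_or_odd m with hpar | hpar
  · -- m even, so l ≠ 0; use page 0, whose first edge is negative
    have hl0 : l ≠ 0 := fun h => hbad (Or.inr ⟨hpar, h⟩)
    have hin : (0 : ℕ) < n := by omega
    have hσ1 : sigmaL m n l (Sum.inl false) (Sum.inr (⟨0, hin⟩, ⟨0, h0⟩)) = -1 := by
      simp only [sigmaL]
      rw [if_pos ⟨by trivial, by omega⟩]
    have adj1 : bookAdj m n (Sum.inl false) (Sum.inr (⟨0, hin⟩, ⟨0, h0⟩)) := rfl
    have hu := hc _ _ adj1
    rw [hσ1] at hu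
    have adj2 : bookAdj m n (Sum.inl true) (Sum.inr (⟨0, hin⟩, ⟨m-3, hlast⟩)) := rfl
    have hv := hc _ _ adj2
    have hσ2 : sigmaL m n l (Sum.inl true) (Sum.inr (⟨0, hin⟩, ⟨m-3, hlast⟩)) = 1 := rfl
    rw [hσ2, one_mul, key _ (m-3) hlast] at hv
    have hmp : (-1 : ℤ) ^ (m - 3) = -1 := by
      have : Odd (m - 3) := by rcases hpar with ⟨t, ht⟩; exact ⟨t - 2, by omega⟩
      exact this.neg_one_pow
    rw [hmp] at hv
    have adjuv : bookAdj m n (Sum.inl false) (Sum.inl true) := by simp [bookAdj]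
    have huv := hc _ _ adjuv
    have hσuv : sigmaL m n l (Sum.inl false) (Sum.inl true) = 1 := rfl
    rw [hσuv, one_mul] at huv
    rcases hpm (Sum.inr (⟨0, hin⟩, ⟨0, h0⟩)) with h1 | h1 <;>
      rcases hpm (Sum.inl false) with h2 | h2 <;>
      rcases hpm (Sum.inl true) with h3 | h3 <;> omega
  · -- m odd, so l ≠ n; use page l, whose first edge is positive
    have hln : l ≠ n := fun h => hbad (Or.inl ⟨hpar, h⟩)
    have hin : l < n := by omega
    have hσ1 : sigmaL m n l (Sum.inl false) (Sum.inr (⟨l, hin⟩, ⟨0, h0⟩)) = 1 := by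
      simp only [sigmaL]
      rw [if_neg (fun h => absurd h.2 (lt_irrefl l))]
    have adj1 : bookAdj m n (Sum.inl false) (Sum.inr (⟨l, hin⟩, ⟨0, h0⟩)) := rfl
    have hu := hc _ _ adj1
    rw [hσ1, one_mul] at hu
    have adj2 : bookAdj m n (Sum.inl true) (Sum.inr (⟨l, hin⟩, ⟨m-3, hlast⟩)) := rfl
    have hv := hc _ _ adj2
    have hσ2 : sigmaL m n l (Sum.inl true) (Sum.inr (⟨l, hin⟩, ⟨m-3, hlast⟩)) = 1 := rfl
    rw [hσ2, one_mul, key _ (m-3) hlast] at hv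
    have hmp : (-1 : ℤ) ^ (m - 3) = 1 := by
      have : Even (m - 3) := by rcases hpar with ⟨t, ht⟩; exact ⟨t - 1, by omega⟩
      exact this.neg_one_pow
    rw [hmp, one_mul] at hv
    have adjuv : bookAdj m n (Sum.inl false) (Sum.inl true) := by simp [bookAdj]
    have huv := hc _ _ adjuv
    have hσuv : sigmaL m n l (Sum.inl false) (Sum.inl true) = 1 := rfl
    rw [hσuv, one_mul] at huv
    rcases hpm (Sum.inr (⟨l, hin⟩, ⟨0, h0⟩)) with h1 | h1 <;>
      rcases hpm (Sum.inl false) with h2 | h2 <;>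
      rcases hpm (Sum.inl true) with h3 | h3 <;> omega

lemma two_coloring (m n l : ℕ) (hm : 3 ≤ m) (hl : l ≤ n)
    (hcond : (Odd m ∧ l = n) ∨ (Even m ∧ l = 0)) :
    IsProperColoring m n (sigmaL m n l)
      (fun x => match x with
        | Sum.inl false => 1
        | Sum.inl true => -1
        | Sum.inr (_, j) => (-1) ^ j.val * (if Odd m then 1 else -1)) := by
  have hlastval : ((-1 : ℤ)) ^ (m - 3) * (if Odd m then (1:ℤ) else -1) = 1 := by
    rcases Nat.even_or_odd m with h | h
    · have ho : Odd (m - 3) := by rcases h with ⟨t, ht⟩; exact ⟨t - 2, by omega⟩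
      rw [ho.neg_one_pow, if_neg (Nat.not_odd_iff_even.mpr h)]; norm_num
    · have he : Even (m - 3) := by rcases h with ⟨t, ht⟩; exact ⟨t - 1, by omega⟩
      rw [he.neg_one_pow, if_pos h]; norm_num
  have hσval : ∀ (i : Fin n), (if ((0:ℕ) = 0 ∧ i.val < l) then (-1:ℤ) else 1) =
      (if Odd m then -1 else 1) := by
    intro i
    rcases hcond with ⟨hodd, rfl⟩ | ⟨heven, rfl⟩
    · rw [if_pos ⟨rfl, i.isLt⟩, if_pos hodd]
    · rw [if_neg (by omega), if_neg (Nat.not_odd_iff_even.mpr heven)]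
  intro x y hxy
  rcases x with (_|_) | ⟨i, j⟩ <;> rcases y with (_|_) | ⟨i', j'⟩ <;>
    simp only [bookAdj, sigmaL] at hxy ⊢
  · exact absurd rfl hxy
  · norm_num
  · rw [hxy, hσval i', pow_zero, one_mul]
    by_cases h : Odd m <;> simp [h]
  · norm_num
  · exact absurd rfl hxy
  · rw [hxy, one_mul, hlastval]; norm_num
  · rw [hxy, hσval i, mul_one, pow_zero, one_mul]
    by_cases h : Odd m <;> simp [h]
  · rw [hxy, hlastval]; norm_num
  · obtain ⟨-, hj⟩ := hxy
    have hp : ∀ jv : ℕ, ((-1:ℤ)) ^ jv = 1 ∨ ((-1:ℤ)) ^ jv = -1 := by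
      intro jv
      rcases Nat.even_or_odd jv with h | h
      · exact Or.inl h.neg_one_pow
      · exact Or.inr h.neg_one_pow
    have hts : (if Odd m then (1:ℤ) else -1) = 1 ∨ (if Odd m then (1:ℤ) else -1) = -1 := by
      by_cases h : Odd m <;> simp [h]
    rw [one_mul]
    rcases hj with h | h
    · rw [← h, pow_succ]
      rcases hp j.val with hpp | hpp <;> rcases hts with ht | ht <;> rw [hpp, ht] <;> norm_num
    · rw [← h, pow_succ]
      rcases hp j'.val with hpp | hpp <;> rcases hts with ht | ht <;> rw [hpp, ht] <;> norm_num


/-- The chromatic number of `(B(m,n), σ_l)` is `2` if (`m` odd and `l = n`) or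
(`m` even and `l = 0`), and `3` otherwise. -/
theorem statement2 (m n l : ℕ) (hm : 3 ≤ m) (hn : 2 ≤ n) (hl : l ≤ n) :
    sInf (({q | ∃ k : ℕ, q = 2 * k + 1 ∧
              ∃ c : BookVertex m n → ℤ, (∀ x, |c x| ≤ (k : ℤ)) ∧
                IsProperColoring m n (sigmaL m n l) c} ∪
           {q | ∃ k : ℕ, 1 ≤ k ∧ q = 2 * k ∧
              ∃ c : BookVertex m n → ℤ, (∀ x, c x ≠ 0 ∧ |c x| ≤ (k : ℤ)) ∧
                IsProperColoring m n (sigmaL m n l) c}) : Set ℕ) =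
      if (Odd m ∧ l = n) ∨ (Even m ∧ l = 0) then 2 else 3 := by
  set S : Set ℕ := _ ∪ _ with hS
  -- 1 is never in S
  have hno1 : ∀ (c : BookVertex m n → ℤ), (∀ x, |c x| ≤ (0 : ℤ)) →
      ¬ IsProperColoring m n (sigmaL m n l) c := by
    intro c hb hc
    have adjuv : bookAdj m n (Sum.inl false) (Sum.inl true) := by simp [bookAdj]
    have huv := hc _ _ adjuv
    have hσuv : sigmaL m n l (Sum.inl false) (Sum.inl true) = 1 := rfl
    rw [hσuv, one_mul] at huv
    have h1 := abs_nonpos_iff.mp (hb (Sum.inl false))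
    have h2 := abs_nonpos_iff.mp (hb (Sum.inl true))
    rw [h1, h2] at huv
    exact huv rfl
  -- 3 is always in S
  have h3 : 3 ∈ S := by
    left
    refine ⟨1, rfl, _, fun x => ?_, three_coloring' m n l⟩
    rcases x with (_|_) | ⟨i, j⟩ <;> simp <;> split <;> norm_num
  by_cases hcond : (Odd m ∧ l = n) ∨ (Even m ∧ l = 0)
  · rw [if_pos hcond]
    have h2 : 2 ∈ S := by
      right
      refine ⟨1, le_refl 1, rfl, _, fun x => ?_, two_coloring m n l hm hl hcond⟩
      have hval : ∀ jv : ℕ, ((-1:ℤ)) ^ jv * (if Odd m then (1:ℤ) else -1) = 1 ∨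
          ((-1:ℤ)) ^ jv * (if Odd m then (1:ℤ) else -1) = -1 := by
        intro jv
        rcases Nat.even_or_odd jv with h | h <;> rw [h.neg_one_pow] <;>
          by_cases ho : Odd m <;> simp [ho]
      rcases x with (_|_) | ⟨i, j⟩
      · norm_num
      · norm_num
      · rcases hval j.val with h | h <;>
          · show ((-1:ℤ)) ^ j.val * _ ≠ 0 ∧ |((-1:ℤ)) ^ j.val * _| ≤ 1
            rw [h]; norm_num
    refine le_antisymm (Nat.sInf_le h2) (le_csInf ⟨2, h2⟩ ?_)
    rintro q (⟨k, rfl, c, hb, hc⟩ | ⟨k, hk, rfl, c, hb, hc⟩)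
    · rcases Nat.eq_zero_or_pos k with rfl | hk
      · exact absurd hc (hno1 c (by exact_mod_cast hb))
      · omega
    · omega
  · rw [if_neg hcond]
    refine le_antisymm (Nat.sInf_le h3) (le_csInf ⟨3, h3⟩ ?_)
    rintro q (⟨k, rfl, c, hb, hc⟩ | ⟨k, hk, rfl, c, hb, hc⟩)
    · rcases Nat.eq_zero_or_pos k with rfl | hk
      · exact absurd hc (hno1 c (by exact_mod_cast hb))
      · omega
    · rcases eq_or_lt_of_le hk with rfl | hk2
      · exfalso
        apply no_two m n l hm hn hl hcond c _ hc
        intro x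
        have h1 := (hb x).1
        have h2 := (hb x).2
        have := abs_le.mp h2
        push_cast at this
        omega
      · omega
end

section
/- Let n ≥ 2 and k ≥ 0. The number of proper colorings of the unbalanced cycle C_n^− with color set {−k,…,−1,0,1,…,k} equals (2k)^n. -/
section Aux

variable (m k : ℕ)

/-- injectivity of the cast `ℤ → ZMod (2k+1)` on `[-k, k]`. -/
lemma aux_int_inj {x y : ℤ} (hx : |x| ≤ (k : ℤ)) (hy : |y| ≤ (k : ℤ))
    (h : ((x : ZMod (2 * k + 1)) = (y : ZMod (2 * k + 1)))) : x = y := by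
  have hd : ((2 * k + 1 : ℕ) : ℤ) ∣ x - y := by
    rwa [← ZMod.intCast_zmod_eq_zero_iff_dvd, Int.cast_sub, sub_eq_zero]
  have hb : |x - y| < ((2 * k + 1 : ℕ) : ℤ) := by
    rw [abs_le] at hx hy
    rw [abs_lt]
    push_cast
    omega
  have := Int.eq_zero_of_abs_lt_dvd hd hb
  omega

lemma aux_valMinAbs_abs_le (u : ZMod (2 * k + 1)) : |u.valMinAbs| ≤ (k : ℤ) := by
  have h := ZMod.natAbs_valMinAbs_le u
  have h2 : (2 * k + 1) / 2 = k := by omega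
  rw [h2] at h
  rw [Int.abs_eq_natAbs]
  exact_mod_cast h

lemma aux_valMinAbs_intCast {x : ℤ} (hx : |x| ≤ (k : ℤ)) :
    ((x : ZMod (2 * k + 1))).valMinAbs = x :=
  aux_int_inj k (aux_valMinAbs_abs_le k _) hx (by rw [ZMod.coe_valMinAbs])

/-- constraints on the `ZMod (2k+1)`-valued colorings -/
def QT (C : ZMod (m + 2) → ZMod (2 * k + 1)) : Prop :=
  (∀ i : ZMod (m + 2), i ≠ -1 → C i ≠ C (i + 1)) ∧ C (-1) ≠ - C 0

lemma aux_ne_neg_one_iff (i : ZMod (m + 2)) : i ≠ -1 ↔ i.val ≠ m + 1 := by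
  constructor
  · intro h hv
    apply h
    apply ZMod.val_injective
    rw [hv, ZMod.val_neg_one]
  · intro h hv
    apply h
    rw [hv, ZMod.val_neg_one]

lemma aux_succ_val {i : ZMod (m + 2)} (h : i ≠ -1) : (i + 1).val = i.val + 1 := by
  have h1 : i.val ≠ m + 1 := (aux_ne_neg_one_iff m i).mp h
  have h2 : i.val < m + 2 := ZMod.val_lt i
  have h3 : i + 1 = ((i.val + 1 : ℕ) : ZMod (m + 2)) := by
    push_cast
    simp [ZMod.natCast_val, ZMod.cast_id]
  rw [h3, ZMod.val_cast_of_lt (by omega)]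

lemma aux_cast_ne_neg_one {i : ℕ} (h : i < m + 1) : ((i : ℕ) : ZMod (m + 2)) ≠ -1 := by
  rw [aux_ne_neg_one_iff, ZMod.val_cast_of_lt (by omega)]
  omega

/-- the "difference" map -/
def Tmap (C : ZMod (m + 2) → ZMod (2 * k + 1)) (i : ZMod (m + 2)) : ZMod (2 * k + 1) :=
  if i = -1 then C 0 + C (-1) else C (i + 1) - C i

/-- rebuild a coloring from the differences -/
noncomputable def build (D : ZMod (m + 2) → ZMod (2 * k + 1)) (j : ZMod (m + 2)) :
    ZMod (2 * k + 1) :=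
  (2 : ZMod (2 * k + 1))⁻¹ * (D (-1) - ∑ i ∈ Finset.range (m + 1), D i)
    + ∑ i ∈ Finset.range j.val, D i

lemma aux_two_mul_inv_two (x : ZMod (2 * k + 1)) :
    2 * ((2 : ZMod (2 * k + 1))⁻¹ * x) = x := by
  have hu : IsUnit (2 : ZMod (2 * k + 1)) := by
    have := (ZMod.isUnit_iff_coprime 2 (2 * k + 1)).mpr (by simp [Nat.coprime_two_left])
    simpa using this
  rw [← mul_assoc, ZMod.mul_inv_of_unit _ hu, one_mul]

lemma build_zero (D : ZMod (m + 2) → ZMod (2 * k + 1)) :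
    build m k D 0 = (2 : ZMod (2 * k + 1))⁻¹ * (D (-1) - ∑ i ∈ Finset.range (m + 1), D i) := by
  simp [build, ZMod.val_zero]

lemma build_neg_one (D : ZMod (m + 2) → ZMod (2 * k + 1)) :
    build m k D (-1) = (2 : ZMod (2 * k + 1))⁻¹ * (D (-1) - ∑ i ∈ Finset.range (m + 1), D i)
      + ∑ i ∈ Finset.range (m + 1), D i := by
  rw [build, ZMod.val_neg_one]

lemma build_succ_sub (D : ZMod (m + 2) → ZMod (2 * k + 1)) {j : ZMod (m + 2)} (h : j ≠ -1) :
    build m k D (j + 1) - build m k D j = D j := by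
  rw [build, build, aux_succ_val m h,
    Finset.sum_range_succ (fun i => D ((i : ℕ) : ZMod (m + 2))) j.val]
  have hjj : ((j.val : ℕ) : ZMod (m + 2)) = j := by simp [ZMod.natCast_val, ZMod.cast_id]
  rw [hjj]
  ring

lemma build_sum (D : ZMod (m + 2) → ZMod (2 * k + 1)) :
    build m k D 0 + build m k D (-1) = D (-1) := by
  rw [build_zero, build_neg_one]
  have h := aux_two_mul_inv_two k (D (-1) - ∑ i ∈ Finset.range (m + 1), D i)
  have : (2 : ZMod (2*k+1)) * ((2 : ZMod (2*k+1))⁻¹ *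
      (D (-1) - ∑ i ∈ Finset.range (m + 1), D i)) =
      (2 : ZMod (2*k+1))⁻¹ * (D (-1) - ∑ i ∈ Finset.range (m + 1), D i) +
      (2 : ZMod (2*k+1))⁻¹ * (D (-1) - ∑ i ∈ Finset.range (m + 1), D i) := by ring
  rw [this] at h
  linear_combination h

lemma tmap_sum (C : ZMod (m + 2) → ZMod (2 * k + 1)) {v : ℕ} (hv : v ≤ m + 1) :
    ∑ i ∈ Finset.range v, Tmap m k C ((i : ℕ) : ZMod (m + 2))
      = C ((v : ℕ) : ZMod (m + 2)) - C 0 := by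
  have hcong : ∀ i ∈ Finset.range v,
      Tmap m k C ((i : ℕ) : ZMod (m + 2))
        = C (((i + 1 : ℕ)) : ZMod (m + 2)) - C ((i : ℕ) : ZMod (m + 2)) := by
    intro i hi
    rw [Finset.mem_range] at hi
    have hne : ((i : ℕ) : ZMod (m + 2)) ≠ -1 := aux_cast_ne_neg_one m (by omega)
    rw [Tmap, if_neg hne]
    push_cast
    ring_nf
  rw [Finset.sum_congr rfl hcong,
    Finset.sum_range_sub (fun i => C ((i : ℕ) : ZMod (m + 2)))]
  simp

lemma build_tmap (C : ZMod (m + 2) → ZMod (2 * k + 1)) : build m k (Tmap m k C) = C := by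
  have hS : ∑ i ∈ Finset.range (m + 1), Tmap m k C ((i : ℕ) : ZMod (m + 2))
      = C (-1) - C 0 := by
    rw [tmap_sum m k C (le_refl (m + 1))]
    congr 2
  have hT1 : Tmap m k C (-1) = C 0 + C (-1) := by rw [Tmap, if_pos rfl]
  have hc0 : build m k (Tmap m k C) 0 = C 0 := by
    rw [build_zero, hT1, hS]
    have : C 0 + C (-1) - (C (-1) - C 0) = 2 * C 0 := by ring
    rw [this, ← mul_assoc]
    have hu : IsUnit (2 : ZMod (2 * k + 1)) := by
      have := (ZMod.isUnit_iff_coprime 2 (2 * k + 1)).mpr (by simp [Nat.coprime_two_left])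
      simpa using this
    rw [ZMod.inv_mul_of_unit _ hu, one_mul]
  funext j
  have hj : j = ((j.val : ℕ) : ZMod (m + 2)) := by simp [ZMod.natCast_val, ZMod.cast_id]
  have hjv : j.val ≤ m + 1 := by have := ZMod.val_lt j; omega
  calc build m k (Tmap m k C) j
      = build m k (Tmap m k C) 0 + ∑ i ∈ Finset.range j.val, Tmap m k C ((i:ℕ) : ZMod (m+2)) := by
        rw [build_zero, build]
    _ = C 0 + (C ((j.val : ℕ) : ZMod (m + 2)) - C 0) := by rw [hc0, tmap_sum m k C hjv]
    _ = C j := by rw [← hj]; ring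

lemma tmap_build (D : ZMod (m + 2) → ZMod (2 * k + 1)) : Tmap m k (build m k D) = D := by
  funext i
  by_cases hi : i = -1
  · subst hi
    rw [Tmap, if_pos rfl, build_sum]
  · rw [Tmap, if_neg hi, build_succ_sub m k D hi]

/-- Step B: equivalence with nowhere-zero functions. -/
noncomputable def eB : {C : ZMod (m + 2) → ZMod (2 * k + 1) // QT m k C} ≃
    (ZMod (m + 2) → {u : ZMod (2 * k + 1) // u ≠ 0}) where
  toFun := fun C => fun i => ⟨Tmap m k C.1 i, by
    obtain ⟨C, h⟩ := C
    by_cases hi : i = -1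
    · subst hi
      rw [Tmap, if_pos rfl]
      intro hz
      exact h.2 (by linear_combination hz)
    · rw [Tmap, if_neg hi]
      intro hz
      exact h.1 i hi (by linear_combination -hz)⟩
  invFun := fun D => ⟨build m k (fun i => (D i : ZMod (2 * k + 1))), by
    constructor
    · intro i hi hEq
      have := build_succ_sub m k (fun i => (D i : ZMod (2 * k + 1))) hi
      rw [← hEq] at this
      exact (D i).2 (by linear_combination -this)
    · intro hEq
      have := build_sum m k (fun i => (D i : ZMod (2 * k + 1)))
      rw [hEq] at this
      exact (D (-1)).2 (by linear_combination -this)⟩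
  left_inv := fun C => Subtype.ext (build_tmap m k C.1)
  right_inv := fun D => by
    funext i
    have := tmap_build m k (fun i => (D i : ZMod (2 * k + 1)))
    exact Subtype.ext (congrFun this i)

/-- Step A: equivalence between integer colorings and `ZMod (2k+1)` colorings. -/
noncomputable def eA : {c : ZMod (m + 2) → ℤ //
      (∀ x, |c x| ≤ (k : ℤ)) ∧
      (∀ i : ZMod (m + 2), i ≠ -1 → c i ≠ c (i + 1)) ∧
      c (-1) ≠ - c 0} ≃ {C : ZMod (m + 2) → ZMod (2 * k + 1) // QT m k C} where
  toFun := fun c => ⟨fun i => ((c.1 i : ℤ) : ZMod (2 * k + 1)), by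
    obtain ⟨c, hb, h1, h2⟩ := c
    constructor
    · intro i hi hEq
      exact h1 i hi (aux_int_inj k (hb i) (hb (i + 1)) hEq)
    · intro hEq
      apply h2
      have : ((c (-1) : ℤ) : ZMod (2 * k + 1)) = ((- c 0 : ℤ) : ZMod (2 * k + 1)) := by
        push_cast
        exact hEq
      exact aux_int_inj k (hb _) (by rw [abs_neg]; exact hb 0) this⟩
  invFun := fun C => ⟨fun i => ((C.1 i).valMinAbs), by
    obtain ⟨C, h1, h2⟩ := C
    refine ⟨fun i => aux_valMinAbs_abs_le k (C i), ?_, ?_⟩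
    · intro i hi hEq
      exact h1 i hi (ZMod.injective_valMinAbs hEq)
    · intro hEq
      apply h2
      have := congrArg (fun z : ℤ => (z : ZMod (2 * k + 1))) hEq
      simpa [ZMod.coe_valMinAbs] using this⟩
  left_inv := fun c => Subtype.ext (funext fun i => aux_valMinAbs_intCast k (c.2.1 i))
  right_inv := fun C => Subtype.ext (funext fun i => ZMod.coe_valMinAbs (C.1 i))

end Aux

/-- The number of proper colorings of the unbalanced cycle `C_n^-` with color set
`{-k, …, -1, 0, 1, …, k}` is `(2k)^n`.  The vertices are `ZMod n`; all edges
`{i, i+1}` are positive except the edge `{-1, 0}`, which is negative. -/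
theorem statement3 (n k : ℕ) (hn : 2 ≤ n) :
    Nat.card {c : ZMod n → ℤ //
        (∀ x, |c x| ≤ (k : ℤ)) ∧
        (∀ i : ZMod n, i ≠ -1 → c i ≠ c (i + 1)) ∧
        c (-1) ≠ - c 0} = (2 * k) ^ n := by
  obtain ⟨m, rfl⟩ : ∃ m, n = m + 2 := ⟨n - 2, by omega⟩
  rw [Nat.card_congr ((eA m k).trans (eB m k))]
  rw [Nat.card_fun]
  have h1 : Nat.card {u : ZMod (2 * k + 1) // u ≠ 0} = 2 * k := by
    rw [Nat.card_eq_fintype_card]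
    have : Fintype.card {u : ZMod (2 * k + 1) // u ≠ 0}
        = Fintype.card (ZMod (2 * k + 1)) - Fintype.card {u : ZMod (2 * k + 1) // u = 0} :=
      Fintype.card_subtype_compl _
    rw [this, ZMod.card, Fintype.card_subtype_eq]
    omega
  have h2 : Nat.card (ZMod (m + 2)) = m + 2 := by
    rw [Nat.card_eq_fintype_card, ZMod.card]
  rw [h1, h2]
end

section
/- Let n ≥ 2 and k ≥ 1. The number of proper colorings of the unbalanced cycle C_n^− with color set {−k,…,−1,1,…,k} equals (2k−1)^n − (−1)^n. -/
/-!
Write `q = 2k` and `σ` for negation, a fixed-point-free involution of the colour set. A colouring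
of `C_n^-` is a proper colouring of the path `0, 1, …, n-1` with `c(n-1) ≠ σ(c(0))`; let `E_n`
count the proper path colourings with `c(n-1) = σ(c(0))` instead. Appending the colour `σ(c(0))`
to a colouring of `C_n^-` is a bijection onto the colourings counted by `E_{n+1}`, hence
`E_{n+1} = q(q-1)^(n-1) - E_n`, and `E_1 = 0` since `σ` has no fixed points. So
`E_n = (q-1)^(n-1) - (-1)^(n-1)`, and `C_n^-` has `E_{n+1} = (q-1)^n - (-1)^n` colourings.
-/

open Finset

lemma Fin.forall_ne_last_add_one_iff {m : ℕ} {p : Fin (m + 1) → Fin (m + 1) → Prop} :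
    (∀ i, i ≠ Fin.last m → p i (i + 1)) ↔ ∀ j : Fin m, p j.castSucc j.succ := by
  simp [Fin.forall_fin_succ', Fin.castSucc_ne_last, Fin.coeSucc_eq_succ]

namespace UnbalancedCycle

variable {α : Type*} [DecidableEq α] (S : Finset α) (f : α → α)

-- Indexed by the number `m` of edges: the vertices are `Fin (m + 1)`.
def pathColorings (m : ℕ) : Finset (Fin (m + 1) → α) :=
  {c ∈ Fintype.piFinset fun _ => S | ∀ j : Fin m, c j.castSucc ≠ c j.succ}

def cycleColorings (m : ℕ) : Finset (Fin (m + 1) → α) :=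
  {c ∈ pathColorings S m | c (Fin.last m) ≠ f (c 0)}

def closingPathColorings (m : ℕ) : Finset (Fin (m + 1) → α) :=
  {c ∈ pathColorings S m | c (Fin.last m) = f (c 0)}

variable {S f}

lemma mem_pathColorings {m : ℕ} {c : Fin (m + 1) → α} :
    c ∈ pathColorings S m ↔ (∀ i, c i ∈ S) ∧ ∀ j : Fin m, c j.castSucc ≠ c j.succ := by
  simp [pathColorings]

lemma snoc_mem_pathColorings {m : ℕ} {c : Fin (m + 1) → α} {x : α} :
    (Fin.snoc c x : Fin (m + 2) → α) ∈ pathColorings S (m + 1) ↔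
      c ∈ pathColorings S m ∧ x ∈ S ∧ c (Fin.last m) ≠ x := by
  simp only [mem_pathColorings, Fin.forall_fin_succ' (n := m + 1), Fin.forall_fin_succ' (n := m)]
  simp [← Fin.castSucc_succ]
  tauto

variable (S f)

lemma card_pathColorings_zero : #(pathColorings S 0) = #S := by
  simp [pathColorings]

lemma card_pathColorings_succ (m : ℕ) :
    (#(pathColorings S (m + 1)) : ℤ) = #(pathColorings S m) * (#S - 1) := by
  have hsigma : #((pathColorings S m).sigma fun c => S.erase (c (Fin.last m))) =
      #(pathColorings S (m + 1)) := by
    refine card_bij' (fun p _ => Fin.snoc p.1 p.2) (fun d _ => ⟨Fin.init d, d (Fin.last _)⟩)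
      ?_ ?_ ?_ ?_
    · rintro ⟨c, x⟩ h
      rw [mem_sigma, mem_erase] at h
      exact snoc_mem_pathColorings.2 ⟨h.1, h.2.2, Ne.symm h.2.1⟩
    · intro d hd
      rw [← Fin.snoc_init_self d, snoc_mem_pathColorings] at hd
      exact mem_sigma.2 ⟨hd.1, mem_erase.2 ⟨Ne.symm hd.2.2, hd.2.1⟩⟩
    · intro p _
      simp
    · intro d _
      exact Fin.snoc_init_self d
  rw [← hsigma, card_sigma, Nat.cast_sum,
    sum_congr rfl fun c hc => cast_card_erase_of_mem ((mem_pathColorings.1 hc).1 _),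
    sum_const, nsmul_eq_mul]

lemma card_pathColorings (m : ℕ) :
    (#(pathColorings S m) : ℤ) = #S * (#S - 1) ^ m := by
  induction m with
  | zero => simp [card_pathColorings_zero]
  | succ m ih => rw [card_pathColorings_succ, ih]; ring

lemma card_closingPathColorings_add_card_cycleColorings (m : ℕ) :
    #(closingPathColorings S f m) + #(cycleColorings S f m) = #(pathColorings S m) :=
  card_filter_add_card_filter_not _

variable {S f}

lemma closingPathColorings_zero (hf : ∀ x ∈ S, f x ≠ x) : closingPathColorings S f 0 = ∅ :=
  filter_false_of_mem fun _ hc => (hf _ ((mem_pathColorings.1 hc).1 0)).symm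

lemma snoc_mem_closingPathColorings {m : ℕ} {c : Fin (m + 1) → α} {x : α} :
    (Fin.snoc c x : Fin (m + 2) → α) ∈ closingPathColorings S f (m + 1) ↔
      c ∈ pathColorings S m ∧ x ∈ S ∧ c (Fin.last m) ≠ x ∧ x = f (c 0) := by
  rw [closingPathColorings, mem_filter, snoc_mem_pathColorings, and_assoc, and_assoc]
  simp only [Fin.snoc_last, Fin.snoc_apply_zero]

lemma card_closingPathColorings_succ (hS : Set.MapsTo f S S) (m : ℕ) :
    #(closingPathColorings S f (m + 1)) = #(cycleColorings S f m) := by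
  symm
  refine card_bij' (fun c _ => Fin.snoc c (f (c 0))) (fun d _ => Fin.init d) ?_ ?_ ?_ ?_
  · intro c hc
    rw [cycleColorings, mem_filter] at hc
    exact snoc_mem_closingPathColorings.2 ⟨hc.1, hS ((mem_pathColorings.1 hc.1).1 0), hc.2, rfl⟩
  · intro d hd
    obtain ⟨c, x, rfl⟩ : ∃ c x, d = Fin.snoc c x := ⟨_, _, (Fin.snoc_init_self d).symm⟩
    obtain ⟨hc, -, hx, rfl⟩ := snoc_mem_closingPathColorings.1 hd
    simpa [cycleColorings] using ⟨hc, hx⟩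
  · intro c _
    simp
  · intro d hd
    obtain ⟨c, x, rfl⟩ : ∃ c x, d = Fin.snoc c x := ⟨_, _, (Fin.snoc_init_self d).symm⟩
    obtain ⟨-, -, -, rfl⟩ := snoc_mem_closingPathColorings.1 hd
    simp

variable (S f)

lemma card_closingPathColorings (hS : Set.MapsTo f S S) (hf : ∀ x ∈ S, f x ≠ x) (m : ℕ) :
    (#(closingPathColorings S f m) : ℤ) = (#S - 1) ^ m - (-1) ^ m := by
  induction m with
  | zero => simp [closingPathColorings_zero hf]
  | succ m ih =>
    have hsplit : (#(cycleColorings S f m) : ℤ) =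
        #(pathColorings S m) - #(closingPathColorings S f m) := by
      rw [← card_closingPathColorings_add_card_cycleColorings S f m]
      push_cast
      ring
    rw [card_closingPathColorings_succ hS, hsplit, card_pathColorings, ih]
    ring

lemma card_cycleColorings (hS : Set.MapsTo f S S) (hf : ∀ x ∈ S, f x ≠ x) (m : ℕ) :
    (#(cycleColorings S f m) : ℤ) = (#S - 1) ^ (m + 1) - (-1) ^ (m + 1) := by
  rw [← card_closingPathColorings_succ hS, card_closingPathColorings S f hS hf]

lemma natCard_unbalancedCycleColorings (m : ℕ) :
    Nat.card {c : ZMod (m + 1) → α //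
        (∀ x, c x ∈ S) ∧ (∀ i : ZMod (m + 1), i ≠ -1 → c i ≠ c (i + 1)) ∧ c (-1) ≠ f (c 0)} =
      #(cycleColorings S f m) := by
  have hneg : (-1 : ZMod (m + 1)) = Fin.last m := neg_eq_of_add_eq_zero_left (Fin.last_add_one m)
  -- `ZMod (m + 1)` unfolds to `Fin (m + 1)`, so `c` may be read as a `Fin`-indexed colouring.
  refine (Nat.card_congr (Equiv.subtypeEquivRight fun (c : Fin (m + 1) → α) => ?_)).trans
    (Nat.card_eq_finsetCard _)
  rw [cycleColorings, mem_filter, mem_pathColorings, hneg,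
    ← Fin.forall_ne_last_add_one_iff (p := fun i j => c i ≠ c j)]
  exact and_assoc.symm

noncomputable def signedColors (k : ℕ) : Finset ℤ := (Icc (-k : ℤ) k).erase 0

lemma mem_signedColors {k : ℕ} {x : ℤ} : x ∈ signedColors k ↔ x ≠ 0 ∧ |x| ≤ k := by
  simp [signedColors, abs_le]

lemma card_signedColors (k : ℕ) : #(signedColors k) = 2 * k := by
  rw [signedColors, card_erase_of_mem (by simp), Int.card_Icc]
  omega

lemma neg_mapsTo_signedColors (k : ℕ) :
    Set.MapsTo Neg.neg (signedColors k : Set ℤ) (signedColors k) := fun x hx => by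
  simpa [mem_signedColors] using hx

lemma neg_ne_self_of_mem_signedColors {k : ℕ} : ∀ x ∈ signedColors k, -x ≠ x := by
  intro x hx h
  exact (mem_signedColors.1 hx).1 (by omega)

end UnbalancedCycle

open UnbalancedCycle in
theorem statement4_general (n k : ℕ) (hn : 2 ≤ n) :
    (Nat.card {c : ZMod n → ℤ //
        (∀ x, c x ≠ 0 ∧ |c x| ≤ (k : ℤ)) ∧
        (∀ i : ZMod n, i ≠ -1 → c i ≠ c (i + 1)) ∧
        c (-1) ≠ - c 0} : ℤ) = (2 * (k : ℤ) - 1) ^ n - (-1) ^ n := by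
  obtain ⟨m, rfl⟩ : ∃ m, n = m + 1 := ⟨n - 1, by omega⟩
  simp_rw [← mem_signedColors]
  rw [natCard_unbalancedCycleColorings,
    card_cycleColorings _ _ (neg_mapsTo_signedColors k) neg_ne_self_of_mem_signedColors,
    card_signedColors]
  push_cast
  ring

/-- The number of zero-free proper colorings of the unbalanced cycle `C_n^-` with color
set `{-k, …, -1, 1, …, k}` is `(2k-1)^n - (-1)^n`.  The vertices are `ZMod n`;
all edges `{i, i+1}` are positive except the edge `{-1, 0}`, which is negative. -/
theorem statement4 (n k : ℕ) (hn : 2 ≤ n) (hk : 1 ≤ k) :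
    (Nat.card {c : ZMod n → ℤ //
        (∀ x, c x ≠ 0 ∧ |c x| ≤ (k : ℤ)) ∧
        (∀ i : ZMod n, i ≠ -1 → c i ≠ c (i + 1)) ∧
        c (-1) ≠ - c 0} : ℤ) = (2 * (k : ℤ) - 1) ^ n - (-1) ^ n :=
  statement4_general n k hn
end

section
/- Let m ≥ 3 and k ≥ 0. The number of proper colorings of the signed graph B_m^1 with color set {−k,…,−1,0,1,…,k} equals (2k)^2 · γ_m(2k+1). -/
/-
Removing the digon `uv` from `B_m^1` leaves the path `u – u₁ – ⋯ – u_{m-2} – v`, so a coloring is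
a pair `(c u, c v)` with `c u ≠ ±c v` together with a proper coloring of the interior of that path
with its ends precolored. With `λ` colors and distinct end colors the interior colorings are the
walks of length `m - 1` between two distinct vertices of `K_λ`; there are
`((λ-1)^(m-1) + (-1)^m) / λ = γ_m(λ)` of them whatever the end colors are. For the `λ = 2k+1`
colors `{-k, …, k}` there are `(λ-1)^2 = (2k)^2` admissible end pairs: `2k` with `c u = 0` and
`2k - 1` for each of the `2k` other values of `c u`.
-/

open Finset

theorem mul_gammaP {m : ℕ} (hm : 1 ≤ m) (x : ℤ) :
    x * gammaP m x = (x - 1) ^ (m - 1) + (-1) ^ m := by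
  have h := geom_sum₂_mul (-1 : ℤ) (x - 1) (m - 1)
  simp only [show ∀ i, m - 1 - 1 - i = m - 2 - i by omega] at h
  obtain ⟨m, rfl⟩ := Nat.exists_eq_add_of_le' hm
  simp only [gammaP, Nat.add_sub_cancel, pow_succ] at h ⊢
  linear_combination -h

theorem List.isChain_cons_ofFn_append_singleton {α : Type*} {R : α → α → Prop} {n : ℕ}
    (a b : α) (p : Fin (n + 1) → α) :
    (a :: (List.ofFn p ++ [b])).IsChain R ↔
      R a (p 0) ∧ (∀ i : Fin n, R (p i.castSucc) (p i.succ)) ∧ R (p (Fin.last n)) b := by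
  induction n generalizing a with
  | zero => simp [List.ofFn_succ]
  | succ n ih =>
    rw [List.ofFn_succ, List.cons_append, List.isChain_cons_cons, ih, Fin.forall_fin_succ]
    simp [Fin.succ_last, and_assoc]

section PathColorings

variable {α : Type*} [DecidableEq α] (S : Finset α)

def pathColorings (ℓ : ℕ) (a b : α) : Finset (Fin ℓ → α) :=
  {p ∈ Fintype.piFinset fun _ => S | (a :: (List.ofFn p ++ [b])).IsChain (· ≠ ·)}

theorem card_pathColorings_zero (a b : α) :
    #(pathColorings S 0 a b) = if a = b then 0 else 1 := by
  split_ifs with h <;> simp [pathColorings, h]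

theorem card_pathColorings_succ (ℓ : ℕ) (a b : α) :
    #(pathColorings S (ℓ + 1) a b) = ∑ c ∈ S.erase a, #(pathColorings S ℓ c b) := by
  rw [← card_sigma]
  refine card_bij' (fun p _ => ⟨p 0, Fin.tail p⟩) (fun x _ => Fin.cons x.1 x.2) ?_ ?_ ?_ ?_
  · intro p hp
    simp_all [pathColorings, List.ofFn_succ, Fin.forall_fin_succ, ne_comm, Fin.tail_def]
  · rintro ⟨c, q⟩ hq
    simp_all [pathColorings, List.ofFn_succ, Fin.forall_fin_succ, ne_comm]
  · intro p _; exact Fin.cons_self_tail p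
  · rintro ⟨c, q⟩ _; simp

-- `pathColorings S ℓ a b` is in bijection with the walks of length `ℓ + 1` from `a` to `b` in the
-- complete graph on `S`; the closed form comes from its spectrum `{#S - 1, -1, …, -1}`.
theorem card_mul_card_pathColorings {b : α} (hb : b ∈ S) (ℓ : ℕ) {a : α} (ha : a ∈ S) :
    (#S : ℤ) * #(pathColorings S ℓ a b) =
      (#S - 1) ^ (ℓ + 1) + (-1) ^ ℓ * (1 - #S * if a = b then 1 else 0) := by
  induction ℓ generalizing a with
  | zero => rw [card_pathColorings_zero]; split_ifs <;> simp
  | succ ℓ ih =>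
    have hsum : ∑ c ∈ S, (#S : ℤ) * #(pathColorings S ℓ c b) = #S * (#S - 1) ^ (ℓ + 1) := by
      rw [sum_congr rfl fun c hc => ih hc, sum_add_distrib, ← mul_sum, sum_sub_distrib,
        ← mul_sum, sum_ite_eq' S b, if_pos hb]
      simp
    rw [card_pathColorings_succ, Nat.cast_sum, mul_sum, sum_erase_eq_sub ha, hsum, ih ha]
    ring

theorem card_pathColorings_of_ne {a b : α} (ha : a ∈ S) (hb : b ∈ S) (hab : a ≠ b) (ℓ : ℕ) :
    (#(pathColorings S ℓ a b) : ℤ) = gammaP (ℓ + 2) #S := by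
  have hS : (#S : ℤ) ≠ 0 := by exact_mod_cast (card_pos.mpr ⟨a, ha⟩).ne'
  apply mul_left_cancel₀ hS
  rw [card_mul_card_pathColorings S hb ℓ ha, if_neg hab, mul_gammaP (by omega)]
  simp [pow_succ]

end PathColorings

def digonColorings (S : Finset ℤ) : Finset (ℤ × ℤ) :=
  {ab ∈ S ×ˢ S | ab.1 ≠ ab.2 ∧ ab.1 ≠ -ab.2}

theorem card_digonColorings {S : Finset ℤ} (h0 : 0 ∈ S) (hneg : ∀ a ∈ S, -a ∈ S) :
    (#(digonColorings S) : ℤ) = (#S - 1) ^ 2 := by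
  have hfiber : ∀ a ∈ S, (#{b ∈ S | a ≠ b ∧ a ≠ -b} : ℤ) = #S - 2 + if a = 0 then 1 else 0 := by
    intro a ha
    have : {b ∈ S | a ≠ b ∧ a ≠ -b} = (S.erase a).erase (-a) := by
      ext b; simp only [mem_filter, mem_erase]; grind
    rw [this]
    split_ifs with h
    · subst h
      rw [neg_zero, erase_idem, cast_card_erase_of_mem ha]
      ring
    · rw [cast_card_erase_of_mem (mem_erase.2 ⟨by omega, hneg a ha⟩), cast_card_erase_of_mem ha]
      ring
  have hsplit : #(digonColorings S) = ∑ a ∈ S, #{b ∈ S | a ≠ b ∧ a ≠ -b} := by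
    simp only [digonColorings, card_filter, sum_product]
  rw [hsplit, Nat.cast_sum, sum_congr rfl hfiber, sum_add_distrib, sum_ite_eq' S 0, if_pos h0,
    sum_const, nsmul_eq_mul]
  ring

def IsSignedBookColoring (m : ℕ) (S : Finset ℤ) (c : BookVertex m 1 → ℤ) : Prop :=
  (∀ x, c x ∈ S) ∧
    (∀ x y, bookAdj m 1 x y →
      ¬((x = Sum.inl false ∧ y = Sum.inl true) ∨ (x = Sum.inl true ∧ y = Sum.inl false)) →
        c x ≠ c y) ∧
    c (Sum.inl false) ≠ c (Sum.inl true) ∧ c (Sum.inl false) ≠ - c (Sum.inl true)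

theorem isSignedBookColoring_iff {n : ℕ} {S : Finset ℤ} {c : BookVertex (n + 3) 1 → ℤ} :
    IsSignedBookColoring (n + 3) S c ↔
      (c (.inl false), c (.inl true)) ∈ digonColorings S ∧
        (fun j : Fin (n + 1) => c (.inr (0, j))) ∈
          pathColorings S (n + 1) (c (.inl false)) (c (.inl true)) := by
  simp only [IsSignedBookColoring, digonColorings, pathColorings, mem_filter, mem_product,
    Fintype.mem_piFinset, List.isChain_cons_ofFn_append_singleton]
  constructor
  · rintro ⟨hS, hadj, huv, huv'⟩
    refine ⟨⟨⟨hS _, hS _⟩, huv, huv'⟩, fun j => hS _, hadj _ _ rfl (by simp),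
      fun i => hadj _ _ ⟨rfl, .inl rfl⟩ (by simp), hadj _ _ (by simp [bookAdj]) (by simp)⟩
  · rintro ⟨⟨⟨hu, hv⟩, huv, huv'⟩, hp, hu0, hstep, hlastv⟩
    have hfirst (j : Fin (n + 1)) (hj : j.val = 0) : c (.inl false) ≠ c (.inr (0, j)) := by
      obtain rfl : j = 0 := Fin.ext hj
      exact hu0
    have hlast (j : Fin (n + 1)) (hj : j.val = n) : c (.inr (0, j)) ≠ c (.inl true) := by
      obtain rfl : j = Fin.last n := Fin.ext hj
      exact hlastv
    have hconsec (j j' : Fin (n + 1)) (h : j.val + 1 = j'.val) :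
        c (.inr (0, j)) ≠ c (.inr (0, j')) := by
      have hj : j.val < n := by omega
      rw [show j' = Fin.succ ⟨j, hj⟩ from Fin.ext h.symm]
      exact hstep ⟨j, hj⟩
    refine ⟨?_, ?_, huv, huv'⟩
    · rintro ((_ | _) | ⟨i, j⟩)
      exacts [hu, hv, Subsingleton.elim i 0 ▸ hp j]
    · rintro ((_ | _) | ⟨i, j⟩) ((_ | _) | ⟨i', j'⟩) hadj hnot
      · exact absurd rfl hadj
      · exact absurd (.inl ⟨rfl, rfl⟩) hnot
      · rw [Subsingleton.elim i' 0]; exact hfirst j' hadj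
      · exact absurd (.inr ⟨rfl, rfl⟩) hnot
      · exact absurd rfl hadj
      · rw [Subsingleton.elim i' 0]; exact (hlast j' (by simpa [bookAdj] using hadj)).symm
      · rw [Subsingleton.elim i 0]; exact (hfirst j hadj).symm
      · rw [Subsingleton.elim i 0]; exact hlast j (by simpa [bookAdj] using hadj)
      · rw [Subsingleton.elim i 0, Subsingleton.elim i' 0]
        rcases hadj.2 with h | h
        exacts [hconsec j j' h, (hconsec j' j h).symm]

def signedBookColoringsEquiv (n : ℕ) (S : Finset ℤ) :
    {c // IsSignedBookColoring (n + 3) S c} ≃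
      (digonColorings S).sigma fun ab => pathColorings S (n + 1) ab.1 ab.2 where
  toFun c := ⟨⟨(c.1 (.inl false), c.1 (.inl true)), fun j => c.1 (.inr (0, j))⟩,
    mem_sigma.2 (isSignedBookColoring_iff.1 c.2)⟩
  invFun x := ⟨Sum.elim (fun t => cond t x.1.1.2 x.1.1.1) (fun ij => x.1.2 ij.2),
    isSignedBookColoring_iff.2 (mem_sigma.1 x.2)⟩
  left_inv := by
    rintro ⟨c, hc⟩
    ext ((_ | _) | ⟨i, j⟩)
    · rfl
    · rfl
    · simp [Subsingleton.elim i 0]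
  right_inv _ := rfl

theorem card_signedBookColorings (n : ℕ) (S : Finset ℤ) :
    (Nat.card {c // IsSignedBookColoring (n + 3) S c} : ℤ) =
      #(digonColorings S) * gammaP (n + 3) #S := by
  rw [Nat.card_congr (signedBookColoringsEquiv n S), Nat.card_eq_finsetCard, card_sigma,
    Nat.cast_sum, sum_congr rfl fun ab hab => ?_, sum_const, nsmul_eq_mul]
  simp only [digonColorings, mem_filter, mem_product] at hab
  exact card_pathColorings_of_ne S hab.1.1 hab.1.2 hab.2.1 (n + 1)

/-- The number of proper colorings of `B_m^1` (the book graph `B(m,1)` with the edge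
`uv` replaced by a digon with one positive and one negative edge) with color set
`{-k, …, -1, 0, 1, …, k}` is `(2k)^2 · γ_m(2k+1)`. -/
theorem statement7 (m : ℕ) (hm : 3 ≤ m) (k : ℕ) :
    (Nat.card {c : BookVertex m 1 → ℤ //
        (∀ x, |c x| ≤ (k : ℤ)) ∧
        (∀ x y, bookAdj m 1 x y →
          ¬((x = Sum.inl false ∧ y = Sum.inl true) ∨
            (x = Sum.inl true ∧ y = Sum.inl false)) → c x ≠ c y) ∧
        c (Sum.inl false) ≠ c (Sum.inl true) ∧
        c (Sum.inl false) ≠ - c (Sum.inl true)} : ℤ) =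
      (2 * (k : ℤ)) ^ 2 * gammaP m (2 * (k : ℤ) + 1) := by
  obtain ⟨n, rfl⟩ := Nat.exists_eq_add_of_le' hm
  have hcount := card_signedBookColorings n (Icc (-k : ℤ) k)
  simp only [IsSignedBookColoring, mem_Icc, ← abs_le] at hcount
  have hcard : (#(Icc (-k : ℤ) k) : ℤ) = 2 * k + 1 := by rw [Int.card_Icc]; omega
  rw [hcount, card_digonColorings (by simp)
    (fun a ha => by rw [mem_Icc] at ha ⊢; omega), hcard]
  ring
end

section
/- Let m ≥ 3, n ≥ 2 and k ≥ 0. The number of proper colorings of the signed graph B_m^n with color set {−k,…,−1,0,1,…,k} equals (2k)^2 · γ_m(2k+1)^n. -/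
/-! A coloring of `B_m^n` is the choice of the colors `a = c(u)`, `b = c(v)`, with `a ≠ ±b`,
together with, independently on each page, a coloring of the path `u_1 … u_{m-2}` that is proper
as part of the walk `a, u_1, …, u_{m-2}, b`. Peeling off the first vertex of such a walk gives a
recursion in `m`, solved jointly for `a = b` and `a ≠ b`: with `λ` colors the count is `γ_m(λ)`
when `a ≠ b`, by `γ_{m+1}(λ) = (λ-1)^{m-1} - γ_m(λ)` and `λ γ_m(λ) = (λ-1)^{m-1} + (-1)^m`.
Among the `2k+1` colors `{-k, …, k}` exactly `(2k)^2` pairs satisfy `a ≠ ±b`. -/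

open Finset

lemma gammaP_two (x : ℤ) : gammaP 2 x = 1 := by simp [gammaP]

lemma gammaP_add_three (t : ℕ) (x : ℤ) :
    gammaP (t + 3) x = (x - 1) ^ (t + 1) - gammaP (t + 2) x := by
  have hshift : ∀ i ∈ range (t + 1), (-1 : ℤ) ^ (i + 1) * (x - 1) ^ (t + 1 - (i + 1)) =
      -((-1) ^ i * (x - 1) ^ (t - i)) := fun i _ => by
    rw [Nat.add_sub_add_right, pow_succ]; ring
  simp only [gammaP, show t + 3 - 1 = t + 1 + 1 by omega, show t + 3 - 2 = t + 1 by omega,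
    show t + 2 - 1 = t + 1 by omega, show t + 2 - 2 = t by omega]
  rw [sum_range_succ', sum_congr rfl hshift, sum_neg_distrib]
  simp only [pow_zero, one_mul, Nat.sub_zero]
  ring

lemma mul_gammaP_add_two (t : ℕ) (x : ℤ) :
    x * gammaP (t + 2) x = (x - 1) ^ (t + 1) + (-1) ^ t := by
  induction t with
  | zero => rw [gammaP_two]; ring
  | succ t ih => rw [gammaP_add_three, mul_sub, ih]; ring

section ProperPath

variable {α : Type*}

def IsProperPath (a b : α) {t : ℕ} (g : Fin (t + 1) → α) : Prop :=
  g 0 ≠ a ∧ (∀ j : Fin t, g j.castSucc ≠ g j.succ) ∧ g (Fin.last t) ≠ b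

lemma isProperPath_succ_iff {a b : α} {t : ℕ} (g : Fin (t + 2) → α) :
    IsProperPath a b g ↔ g 0 ≠ a ∧ IsProperPath (g 0) b (Fin.tail g) := by
  simp only [IsProperPath, Fin.forall_fin_succ, Fin.tail]
  constructor
  · rintro ⟨h0, ⟨h1, hs⟩, hl⟩
    exact ⟨h0, Ne.symm h1, hs, hl⟩
  · rintro ⟨h0, h1, hs, hl⟩
    exact ⟨h0, ⟨Ne.symm h1, hs⟩, hl⟩

lemma card_isProperPath_zero (a b : α) :
    Nat.card {g : Fin 1 → α // IsProperPath a b g} = Nat.card {x : α // x ≠ a ∧ x ≠ b} :=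
  Nat.card_congr <| (Equiv.funUnique (Fin 1) α).subtypeEquiv fun g => by
    simp [IsProperPath, Fin.last]

variable [Fintype α] [DecidableEq α]

lemma card_isProperPath_succ (a b : α) (t : ℕ) :
    Nat.card {g : Fin (t + 2) → α // IsProperPath a b g} =
      ∑ x ∈ univ.erase a, Nat.card {g : Fin (t + 1) → α // IsProperPath x b g} := by
  rw [Nat.card_congr <| (Fin.consEquiv fun _ => α).symm.subtypeEquiv
      (q := fun p => p.1 ≠ a ∧ IsProperPath p.1 b p.2) isProperPath_succ_iff,
    Nat.card_congr (Equiv.subtypeProdEquivSigmaSubtype fun x g => x ≠ a ∧ IsProperPath x b g),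
    Nat.card_sigma, ← filter_ne' univ a, sum_filter]
  refine sum_congr rfl fun x _ => ?_
  split_ifs with hx <;> simp [hx]

lemma card_ne_and_ne (a b : α) :
    (Nat.card {x : α // x ≠ a ∧ x ≠ b} : ℤ) = Fintype.card α - 2 + if a = b then 1 else 0 := by
  have hcompl : univ.filter (fun x => x ≠ a ∧ x ≠ b) = ({a, b} : Finset α)ᶜ := by ext; simp
  rw [Nat.card_eq_fintype_card, Fintype.card_subtype, hcompl, card_compl,
    Nat.cast_sub (card_le_univ _)]
  split_ifs with hab
  · rw [hab, pair_eq_singleton, card_singleton]; ring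
  · rw [card_pair hab]; ring

theorem card_isProperPath (a b : α) (t : ℕ) :
    (Nat.card {g : Fin (t + 1) → α // IsProperPath a b g} : ℤ) =
      gammaP (t + 3) (Fintype.card α) - if a = b then (-1) ^ (t + 1) else 0 := by
  induction t generalizing a with
  | zero =>
    rw [card_isProperPath_zero, card_ne_and_ne, gammaP_add_three, gammaP_two]
    split_ifs <;> ring
  | succ t ih =>
    rw [card_isProperPath_succ, Nat.cast_sum, sum_congr rfl fun x _ => ih x,
      sum_erase_eq_sub (mem_univ a), sum_sub_distrib, sum_const, card_univ,
      sum_ite_eq' univ b, if_pos (mem_univ b), nsmul_eq_mul, gammaP_add_three (t + 1)]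
    have hmul := mul_gammaP_add_two (t + 1) (Fintype.card α)
    split_ifs <;> linear_combination hmul

end ProperPath

section BookColoring

variable {α : Type*}

def IsBookColoring {m n : ℕ} (c : BookVertex m n → α) : Prop :=
  ∀ x y, bookAdj m n x y →
    ¬((x = Sum.inl false ∧ y = Sum.inl true) ∨ (x = Sum.inl true ∧ y = Sum.inl false)) →
      c x ≠ c y

lemma isBookColoring_comp_iff {β : Type*} {m n : ℕ} {f : α → β} (hf : Function.Injective f)
    (c : BookVertex m n → α) : IsBookColoring (f ∘ c) ↔ IsBookColoring c := by
  simp only [IsBookColoring, Function.comp_apply, hf.ne_iff]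

lemma isBookColoring_iff {t n : ℕ} (c : BookVertex (t + 3) n → α) :
    IsBookColoring c ↔ ∀ i, IsProperPath (c (Sum.inl false)) (c (Sum.inl true))
      fun j : Fin (t + 1) => c (Sum.inr (i, j)) := by
  constructor
  · intro h i
    exact ⟨h _ _ rfl (by simp), fun j => h _ _ ⟨rfl, Or.inl rfl⟩ (by simp),
      h _ _ (by simp [bookAdj]) (by simp)⟩
  · rintro h ((_ | _) | ⟨i, j⟩) ((_ | _) | ⟨i', j'⟩) hxy huv
    · exact absurd rfl hxy
    · exact absurd (Or.inl ⟨rfl, rfl⟩) huv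
    · obtain rfl : j' = (0 : Fin (t + 1)) := Fin.ext hxy
      exact (h i').1.symm
    · exact absurd (Or.inr ⟨rfl, rfl⟩) huv
    · exact absurd rfl hxy
    · obtain rfl : j' = Fin.last t := Fin.ext hxy
      exact (h i').2.2.symm
    · obtain rfl : j = (0 : Fin (t + 1)) := Fin.ext hxy
      exact (h i).1
    · obtain rfl : j = Fin.last t := Fin.ext hxy
      exact (h i).2.2
    · obtain ⟨rfl, hj | hj⟩ := hxy
      · obtain ⟨k, rfl, rfl⟩ : ∃ k : Fin t, k.castSucc = j ∧ k.succ = j' :=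
          ⟨⟨j, by omega⟩, rfl, Fin.ext hj⟩
        exact (h i).2.1 k
      · obtain ⟨k, rfl, rfl⟩ : ∃ k : Fin t, k.castSucc = j' ∧ k.succ = j :=
          ⟨⟨j', by omega⟩, rfl, Fin.ext hj⟩
        exact ((h i).2.1 k).symm

def bookColoringEquiv {t n : ℕ} (R : α → α → Prop) :
    {c : BookVertex (t + 3) n → α // IsBookColoring c ∧ R (c (.inl false)) (c (.inl true))} ≃
      Σ p : {p : α × α // R p.1 p.2},
        Fin n → {g : Fin (t + 1) → α // IsProperPath p.1.1 p.1.2 g} where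
  toFun c := ⟨⟨(c.1 (.inl false), c.1 (.inl true)), c.2.2⟩,
    fun i => ⟨fun j => c.1 (.inr (i, j)), (isBookColoring_iff c.1).1 c.2.1 i⟩⟩
  invFun q := ⟨fun
      | .inl false => q.1.1.1
      | .inl true => q.1.1.2
      | .inr (i, j) => (q.2 i).1 j,
    (isBookColoring_iff _).2 fun i => (q.2 i).2, q.1.2⟩
  left_inv c := by ext ((_ | _) | _) <;> rfl
  right_inv q := rfl

theorem card_bookColoring [Fintype α] {t n : ℕ} (R : α → α → Prop)
    (hR : ∀ a b, R a b → a ≠ b) :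
    (Nat.card {c : BookVertex (t + 3) n → α //
        IsBookColoring c ∧ R (c (.inl false)) (c (.inl true))} : ℤ) =
      Nat.card {p : α × α // R p.1 p.2} * gammaP (t + 3) (Fintype.card α) ^ n := by
  classical
  have hpages : ∀ p : {p : α × α // R p.1 p.2},
      (Nat.card (Fin n → {g : Fin (t + 1) → α // IsProperPath p.1.1 p.1.2 g}) : ℤ) =
        gammaP (t + 3) (Fintype.card α) ^ n := fun p => by
    rw [Nat.card_fun, Nat.card_eq_fintype_card (α := Fin n), Fintype.card_fin, Nat.cast_pow,
      card_isProperPath, if_neg (hR _ _ p.2), sub_zero]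
  rw [Nat.card_congr (bookColoringEquiv R), Nat.card_sigma, Nat.cast_sum,
    sum_congr rfl fun p _ => hpages p, sum_const, card_univ, nsmul_eq_mul,
    Nat.card_eq_fintype_card]

def boundedBookColoringEquiv (k t n : ℕ) :
    {c : BookVertex (t + 3) n → ℤ // (∀ x, |c x| ≤ (k : ℤ)) ∧ IsBookColoring c ∧
        c (.inl false) ≠ c (.inl true) ∧ c (.inl false) ≠ -c (.inl true)} ≃
      {c : BookVertex (t + 3) n → Icc (-(k : ℤ)) k // IsBookColoring c ∧
        (c (.inl false) : ℤ) ≠ c (.inl true) ∧ (c (.inl false) : ℤ) ≠ -c (.inl true)} where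
  toFun c := ⟨fun x => ⟨c.1 x, mem_Icc.2 (abs_le.1 (c.2.1 x))⟩,
    (isBookColoring_comp_iff Subtype.val_injective _).1 c.2.2.1, c.2.2.2⟩
  invFun c := ⟨fun x => c.1 x, fun x => abs_le.2 (mem_Icc.1 (c.1 x).2),
    (isBookColoring_comp_iff Subtype.val_injective _).2 c.2.1, c.2.2⟩
  left_inv _ := rfl
  right_inv _ := rfl

end BookColoring

theorem card_pairs_ne_ne_neg (s : Finset ℤ) (hneg : ∀ a ∈ s, -a ∈ s) (h0 : 0 ∈ s) :
    (Nat.card {p : s × s // (p.1 : ℤ) ≠ p.2 ∧ (p.1 : ℤ) ≠ -p.2} : ℤ) = (#s - 1) ^ 2 := by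
  have hfiber : ∀ a : s, (Nat.card {b : s // (a : ℤ) ≠ b ∧ (a : ℤ) ≠ -b} : ℤ) =
      #s - 2 + if a = ⟨0, h0⟩ then 1 else 0 := fun a => by
    have hiff : ∀ b : s, (a : ℤ) ≠ b ∧ (a : ℤ) ≠ -b ↔ b ≠ a ∧ b ≠ ⟨-a, hneg a a.2⟩ := fun b => by
      simp only [ne_eq, Subtype.ext_iff, eq_comm (a := (b : ℤ)), neg_eq_iff_eq_neg]
    have hself : a = ⟨-a, hneg a a.2⟩ ↔ a = ⟨0, h0⟩ := by simp only [Subtype.ext_iff]; omega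
    rw [Nat.card_congr (Equiv.subtypeEquivRight hiff), card_ne_and_ne, Fintype.card_coe,
      if_congr hself rfl rfl]
  rw [Nat.card_congr (Equiv.subtypeProdEquivSigmaSubtype fun a b : s => (a : ℤ) ≠ b ∧ (a : ℤ) ≠ -b),
    Nat.card_sigma, Nat.cast_sum, sum_congr rfl fun a _ => hfiber a, sum_add_distrib, sum_const,
    card_univ, Fintype.card_coe, sum_ite_eq' univ, if_pos (mem_univ _), nsmul_eq_mul]
  ring

theorem statement8_general (m n : ℕ) (hm : 3 ≤ m) (k : ℕ) :
    (Nat.card {c : BookVertex m n → ℤ //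
        (∀ x, |c x| ≤ (k : ℤ)) ∧
        (∀ x y, bookAdj m n x y →
          ¬((x = Sum.inl false ∧ y = Sum.inl true) ∨
            (x = Sum.inl true ∧ y = Sum.inl false)) → c x ≠ c y) ∧
        c (Sum.inl false) ≠ c (Sum.inl true) ∧
        c (Sum.inl false) ≠ - c (Sum.inl true)} : ℤ) =
      (2 * (k : ℤ)) ^ 2 * gammaP m (2 * (k : ℤ) + 1) ^ n := by
  -- with `m = t + 3` the page type `Fin (m - 2)` is `Fin (t + 1)` by definitional unfolding
  obtain ⟨t, rfl⟩ : ∃ t, m = t + 3 := ⟨m - 3, by omega⟩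
  have hcard : (#(Icc (-(k : ℤ)) k) : ℤ) = 2 * k + 1 := by rw [Int.card_Icc]; omega
  calc _ = (Nat.card {c : BookVertex (t + 3) n → Icc (-(k : ℤ)) k // IsBookColoring c ∧
          (c (.inl false) : ℤ) ≠ c (.inl true) ∧ (c (.inl false) : ℤ) ≠ -c (.inl true)} : ℤ) :=
        congrArg _ (Nat.card_congr (boundedBookColoringEquiv k t n))
    _ = _ := card_bookColoring (fun a b : Icc (-(k : ℤ)) k => (a : ℤ) ≠ b ∧ (a : ℤ) ≠ -b)
        fun a b h e => h.1 (congrArg Subtype.val e)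
    _ = _ := by
      rw [card_pairs_ne_ne_neg _ (fun a ha => by rw [mem_Icc] at ha ⊢; omega)
        (by simp),
        Fintype.card_coe, hcard]
      ring

/-- The number of proper colorings of `B_m^n` (the book graph `B(m,n)` with the edge
`uv` replaced by a digon with one positive and one negative edge) with color set
`{-k, …, -1, 0, 1, …, k}` is `(2k)^2 · γ_m(2k+1)^n`. -/
theorem statement8 (m n : ℕ) (hm : 3 ≤ m) (hn : 2 ≤ n) (k : ℕ) :
    (Nat.card {c : BookVertex m n → ℤ //
        (∀ x, |c x| ≤ (k : ℤ)) ∧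
        (∀ x y, bookAdj m n x y →
          ¬((x = Sum.inl false ∧ y = Sum.inl true) ∨
            (x = Sum.inl true ∧ y = Sum.inl false)) → c x ≠ c y) ∧
        c (Sum.inl false) ≠ c (Sum.inl true) ∧
        c (Sum.inl false) ≠ - c (Sum.inl true)} : ℤ) =
      (2 * (k : ℤ)) ^ 2 * gammaP m (2 * (k : ℤ) + 1) ^ n :=
  statement8_general m n hm k
end

section
/- Let m ≥ 3, n ≥ 1 and k ≥ 0. The number of proper colorings of the signed book graph (B(m,n), σ_1) with color set {−k,…,−1,0,1,…,k} equals (2k)^m · γ_m(2k+1)^{n−1}. -/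
/-!
Removing `u` and `v` splits a colouring into the colours `a ≠ b` of `u` and `v` and, for each
page, a proper colouring of a path joining them; on the first page the negative edge `u u_1^1`
turns the end colour `a` into `-a`. With `N` colours, the number `W_t(a, b)` of proper colourings
of a path with `t + 1` inner vertices and end colours `a, b` satisfies
`W_{t+1}(a, b) = ∑_{c ≠ b} W_t(a, c)`, whence `W_t(a, b) = γ_{t+3}(N) + [a = b] (-1)^t`.
Summing `W(-a, b) W(a, b)^{n-1}` over `a ≠ b` gives `(N - 1)^m γ_m(N)^{n-1}`: the correction
`-a = b` occurs for the `N - 1` nonzero colours `a`, and `N γ_m(N) = (N - 1)^{m-1} + (-1)^m`.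
-/

open Finset

theorem gammaP_succ {m : ℕ} (hm : 1 ≤ m) (x : ℤ) :
    gammaP (m + 1) x = (x - 1) * gammaP m x + (-1) ^ (m + 1) := by
  obtain ⟨m, rfl⟩ : ∃ m', m = m' + 1 := ⟨m - 1, by omega⟩
  simp only [gammaP, Nat.add_sub_cancel, show m + 1 + 1 - 2 = m by omega, sum_range_succ, mul_sum,
    Nat.sub_self, pow_zero, mul_one]
  congr 1
  · refine sum_congr rfl fun i hi => ?_
    rw [show m - i = m + 1 - 2 - i + 1 by grind, pow_succ]
    ring
  · ring

theorem sum_erase_add_ite_eq {R β : Type*} [CommRing R] [DecidableEq β] {s : Finset β} {b : β}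
    (hb : b ∈ s) (a : β) (x y : R) :
    ∑ c ∈ s.erase b, (x + if a = c then y else 0) =
      (#s - 1) * x + if a ∈ s.erase b then y else 0 := by
  rw [sum_add_distrib, sum_const, card_erase_of_mem hb, sum_ite_eq, nsmul_eq_mul,
    Nat.cast_sub (card_pos.mpr ⟨b, hb⟩), Nat.cast_one]

theorem prod_fin_ite_val_lt {M : Type*} [CommMonoid M] {n l : ℕ} (hl : l ≤ n) (x y : M) :
    ∏ i : Fin n, (if (i : ℕ) < l then x else y) = x ^ l * y ^ (n - l) := by
  have h := card_filter_add_card_filter_not (s := univ) fun i : Fin n => (i : ℕ) < l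
  rw [Fin.card_filter_val_lt, card_univ, Fintype.card_fin, min_eq_right hl] at h
  rw [prod_ite, prod_const, prod_const, Fin.card_filter_val_lt, min_eq_right hl,
    show #{i : Fin n | ¬(i : ℕ) < l} = n - l by omega]

section PathColoring

variable {α : Type*}

-- `g` colours the inner vertices of a path whose two end vertices are coloured `a` and `b`.
structure IsPathColoring {t : ℕ} (a b : α) (g : Fin (t + 1) → α) : Prop where
  first : a ≠ g 0
  step : ∀ j : Fin t, g j.castSucc ≠ g j.succ
  last : g (Fin.last t) ≠ b

namespace IsPathColoring

variable {t : ℕ} {a b : α} {g : Fin (t + 1) → α}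

theorem ne_of_val_add_one_eq (h : IsPathColoring a b g) {j j' : Fin (t + 1)}
    (hj : j.val + 1 = j'.val) : g j ≠ g j' := by
  obtain ⟨s, rfl, rfl⟩ : ∃ s : Fin t, j = s.castSucc ∧ j' = s.succ :=
    ⟨⟨j, by omega⟩, rfl, Fin.ext (by simp [hj])⟩
  exact h.step s

theorem comp_iff {β : Type*} {f : α → β} (hf : Function.Injective f) :
    IsPathColoring (f a) (f b) (fun j => f (g j)) ↔ IsPathColoring a b g :=
  ⟨fun ⟨h₁, h₂, h₃⟩ => ⟨hf.ne_iff.mp h₁, fun j => hf.ne_iff.mp (h₂ j), hf.ne_iff.mp h₃⟩,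
    fun ⟨h₁, h₂, h₃⟩ => ⟨hf.ne h₁, fun j => hf.ne (h₂ j), hf.ne h₃⟩⟩

theorem snoc_iff {c : α} :
    IsPathColoring a b (Fin.snoc g c : Fin (t + 2) → α) ↔ IsPathColoring a c g ∧ c ≠ b := by
  have h₀ : (Fin.snoc g c : Fin (t + 2) → α) 0 = g 0 := Fin.snoc_castSucc (i := 0) ..
  constructor
  · rintro ⟨h₁, h₂, h₃⟩
    rw [Fin.forall_fin_succ'] at h₂
    simp only [Fin.succ_castSucc, Fin.snoc_castSucc, Fin.succ_last, Fin.snoc_last] at h₂ h₃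
    exact ⟨⟨h₀ ▸ h₁, h₂.1, h₂.2⟩, h₃⟩
  · rintro ⟨⟨h₁, h₂, h₃⟩, h₄⟩
    refine ⟨h₀ ▸ h₁, Fin.forall_fin_succ'.mpr ⟨fun j => ?_, ?_⟩, ?_⟩ <;>
      simp only [Fin.succ_castSucc, Fin.snoc_castSucc, Fin.succ_last, Fin.snoc_last]
    exacts [h₂ j, h₃, h₄]

end IsPathColoring

variable [Fintype α] [DecidableEq α]

theorem card_isPathColoring_one (a b : α) :
    (Nat.card {g : Fin 1 → α // IsPathColoring a b g} : ℤ) =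
      Fintype.card α - 2 + if a = b then 1 else 0 := by
  have e : {g : Fin 1 → α // IsPathColoring a b g} ≃ {c : α // c ≠ b ∧ a ≠ c} :=
    (Equiv.funUnique (Fin 1) α).subtypeEquiv fun g =>
      ⟨fun h => ⟨h.last, h.first⟩, fun h => ⟨h.2, fun j => j.elim0, h.1⟩⟩
  rw [Nat.card_congr e, Nat.card_eq_fintype_card, Fintype.card_subtype, ← filter_filter,
    filter_ne', card_filter]
  have h : ∀ c ∈ univ.erase b, ((if a ≠ c then 1 else 0 : ℕ) : ℤ) = 1 + if a = c then -1 else 0 :=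
    fun c _ => by split_ifs <;> simp_all
  rw [Nat.cast_sum, sum_congr rfl h, sum_erase_add_ite_eq (mem_univ b)]
  simp only [card_univ, mem_erase, mem_univ, and_true, ite_not]
  split_ifs <;> ring

theorem card_isPathColoring_snoc (t : ℕ) (a b : α) :
    Nat.card {g : Fin (t + 2) → α // IsPathColoring a b g} =
      ∑ c ∈ univ.erase b, Nat.card {g : Fin (t + 1) → α // IsPathColoring a c g} := by
  calc _ = Nat.card {p : α × (Fin (t + 1) → α) // p.1 ≠ b ∧ IsPathColoring a p.1 p.2} :=
        Nat.card_congr (Equiv.subtypeEquiv (Fin.snocEquiv fun _ => α)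
          fun p => and_comm.trans IsPathColoring.snoc_iff.symm).symm
    _ = ∑ c, Nat.card {g : Fin (t + 1) → α // c ≠ b ∧ IsPathColoring a c g} := by
        rw [Nat.card_congr (Equiv.subtypeProdEquivSigmaSubtype
          fun c g => c ≠ b ∧ IsPathColoring a c g), Nat.card_sigma]
    _ = _ := by
        rw [← filter_ne', sum_filter]
        refine sum_congr rfl fun c _ => ?_
        split_ifs with hc
        · exact Nat.card_congr (Equiv.subtypeEquivRight fun g => and_iff_right hc)
        · exact Nat.card_eq_zero.mpr (.inl ⟨fun g => hc g.2.1⟩)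

theorem card_isPathColoring (t : ℕ) (a b : α) :
    (Nat.card {g : Fin (t + 1) → α // IsPathColoring a b g} : ℤ) =
      gammaP (t + 3) (Fintype.card α) + if a = b then (-1) ^ t else 0 := by
  induction t generalizing b with
  | zero =>
    rw [card_isPathColoring_one]
    norm_num [gammaP, sum_range_succ]
    ring
  | succ t ih =>
    rw [card_isPathColoring_snoc, Nat.cast_sum, sum_congr rfl fun c _ => ih c,
      sum_erase_add_ite_eq (mem_univ b), card_univ, gammaP_succ (by omega : 1 ≤ t + 3)]
    simp only [mem_erase, mem_univ, and_true, ite_not]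
    split_ifs <;> ring

end PathColoring

noncomputable def pathColorCount (S : Finset ℤ) (t : ℕ) (a b : ℤ) : ℕ :=
  Nat.card {g : Fin (t + 1) → S // IsPathColoring a b fun j => (g j : ℤ)}

theorem pathColorCount_eq {S : Finset ℤ} (t : ℕ) {a b : ℤ} (ha : a ∈ S) (hb : b ∈ S) :
    (pathColorCount S t a b : ℤ) = gammaP (t + 3) #S + if a = b then (-1) ^ t else 0 := by
  have h := card_isPathColoring t (⟨a, ha⟩ : S) ⟨b, hb⟩
  simp only [Fintype.card_coe, Subtype.mk.injEq] at h
  have e : {g : Fin (t + 1) → S // IsPathColoring a b fun j => (g j : ℤ)} ≃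
      {g // IsPathColoring (⟨a, ha⟩ : S) ⟨b, hb⟩ g} :=
    Equiv.subtypeEquivRight fun _ =>
      IsPathColoring.comp_iff (a := (⟨a, ha⟩ : S)) (b := ⟨b, hb⟩) Subtype.val_injective
  rw [← h, pathColorCount, Nat.card_congr e]

theorem card_forall_mem_and {X β : Type*} (S : Finset β) (P : (X → β) → Prop) :
    Nat.card {c : X → β // (∀ x, c x ∈ S) ∧ P c} = Nat.card {c : X → S // P fun x => c x} :=
  Nat.card_congr
    { toFun c := ⟨fun x => ⟨c.1 x, c.2.1 x⟩, c.2.2⟩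
      invFun c := ⟨fun x => c.1 x, fun x => (c.1 x).2, c.2⟩ }

section Book

-- Working with `B(t + 3, n)` makes the page type `Fin (t + 3 - 2)` definitionally `Fin (t + 1)`.
variable {t n l : ℕ}

theorem properColoring_book_iff (c : BookVertex (t + 3) n → ℤ) :
    (∀ x y, bookAdj (t + 3) n x y → c x ≠ sigmaL (t + 3) n l x y * c y) ↔
      c (.inl false) ≠ c (.inl true) ∧
        ∀ i : Fin n, IsPathColoring (if (i : ℕ) < l then -c (.inl false) else c (.inl false))
          (c (.inl true)) (fun j => c (.inr (i, j))) := by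
  constructor
  · intro h
    refine ⟨by simpa [sigmaL] using h (.inl false) (.inl true) (by simp [bookAdj]),
      fun i => ⟨?_, fun j => ?_, ?_⟩⟩
    · have := h (.inl false) (.inr (i, (0 : Fin (t + 1)))) rfl
      simp only [sigmaL, Fin.val_zero, true_and] at this
      split_ifs at this ⊢ <;> omega
    · simpa [sigmaL] using h (.inr (i, j.castSucc)) (.inr (i, j.succ)) (by simp [bookAdj])
    · simpa [sigmaL] using h (.inr (i, Fin.last t)) (.inl true) (by simp [bookAdj])
  · rintro ⟨huv, hpath⟩ x y hxy
    rcases x with ((_ | _) | ⟨i, j⟩) <;> rcases y with ((_ | _) | ⟨i', j'⟩) <;>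
      simp only [bookAdj, sigmaL, one_mul, ne_eq, Bool.false_eq_true, not_true_eq_false,
        not_false_eq_true, Nat.add_sub_cancel] at hxy ⊢
    · exact huv
    · obtain rfl : j' = (0 : Fin (t + 1)) := Fin.ext hxy
      have := (hpath i').first
      simp only [Fin.val_zero, true_and]
      split_ifs at this ⊢ <;> omega
    · exact huv.symm
    · obtain rfl : j' = Fin.last t := Fin.ext hxy
      exact (hpath i').last.symm
    · obtain rfl : j = (0 : Fin (t + 1)) := Fin.ext hxy
      have := (hpath i).first
      simp only [Fin.val_zero, true_and]
      split_ifs at this ⊢ <;> omega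
    · obtain rfl : j = Fin.last t := Fin.ext hxy
      exact (hpath i).last
    · obtain ⟨rfl, hj | hj⟩ := hxy
      · exact (hpath i).ne_of_val_add_one_eq hj
      · exact ((hpath i).ne_of_val_add_one_eq hj).symm

theorem card_properColoring_book_sigmaL (S : Finset ℤ) (hl : l ≤ n) :
    Nat.card {c : BookVertex (t + 3) n → ℤ // (∀ x, c x ∈ S) ∧
        ∀ x y, bookAdj (t + 3) n x y → c x ≠ sigmaL (t + 3) n l x y * c y} =
      ∑ a ∈ S, ∑ b ∈ S.erase a,
        pathColorCount S t (-a) b ^ l * pathColorCount S t a b ^ (n - l) := by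
  let split : (BookVertex (t + 3) n → S) ≃ (S × S) × (Fin n → Fin (t + 1) → S) :=
    (Equiv.sumArrowEquivProdArrow _ _ _).trans
      ((Equiv.boolArrowEquivProd _).prodCongr (Equiv.curry _ _ _))
  let Q (ab : S × S) (g : Fin n → Fin (t + 1) → S) : Prop := (ab.1 : ℤ) ≠ ab.2 ∧
    ∀ i : Fin n, IsPathColoring (if (i : ℕ) < l then -(ab.1 : ℤ) else ab.1) ab.2
      fun j => (g i j : ℤ)
  let pages : {c : BookVertex (t + 3) n → S //
        ∀ x y, bookAdj (t + 3) n x y → (c x : ℤ) ≠ sigmaL (t + 3) n l x y * c y} ≃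
      {p : (S × S) × (Fin n → Fin (t + 1) → S) // Q p.1 p.2} :=
    split.subtypeEquiv fun c => properColoring_book_iff fun x => c x
  rw [card_forall_mem_and, Nat.card_congr (pages.trans (Equiv.subtypeProdEquivSigmaSubtype Q)),
    Nat.card_sigma]
  have fiber (ab : S × S) : Nat.card {g // Q ab g} = if (ab.1 : ℤ) ≠ ab.2 then
      pathColorCount S t (-ab.1) ab.2 ^ l * pathColorCount S t ab.1 ab.2 ^ (n - l) else 0 := by
    split_ifs with hab
    · let page (i : Fin n) (h : Fin (t + 1) → S) : Prop :=
        IsPathColoring (if (i : ℕ) < l then -(ab.1 : ℤ) else ab.1) ab.2 fun j => (h j : ℤ)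
      have e : {g // Q ab g} ≃ ∀ i, {h // page i h} :=
        (Equiv.subtypeEquivRight fun _ => and_iff_right hab).trans
          (Equiv.subtypePiEquivPi (p := page))
      rw [Nat.card_congr e, Nat.card_pi, ← prod_fin_ite_val_lt hl]
      refine prod_congr rfl fun i _ => ?_
      split_ifs with hi <;> simp only [page, pathColorCount, hi, ↓reduceIte]
    · exact Nat.card_eq_zero.mpr (.inl ⟨fun g => hab g.2.1⟩)
  rw [Fintype.sum_congr _ _ fiber, Fintype.sum_prod_type, ← sum_coe_sort S]
  refine sum_congr rfl fun a _ => ?_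
  rw [← filter_ne, sum_filter, ← sum_coe_sort S]

theorem card_properColoring_book_sigmaL_one {S : Finset ℤ} (hS : ∀ z ∈ S, -z ∈ S) (h0 : 0 ∈ S)
    (hn : 1 ≤ n) :
    (Nat.card {c : BookVertex (t + 3) n → ℤ // (∀ x, c x ∈ S) ∧
        ∀ x y, bookAdj (t + 3) n x y → c x ≠ sigmaL (t + 3) n 1 x y * c y} : ℤ) =
      (#S - 1) ^ (t + 3) * gammaP (t + 3) #S ^ (n - 1) := by
  set γ := gammaP (t + 3) #S
  have inner (a : ℤ) (ha : a ∈ S) :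
      ∑ b ∈ S.erase a, ((pathColorCount S t (-a) b ^ 1 * pathColorCount S t a b ^ (n - 1) : ℕ) : ℤ)
        = ((#S - 1) * γ + (-1) ^ t + if 0 = a then -(-1) ^ t else 0) * γ ^ (n - 1) := by
    have summand (b : ℤ) (hb : b ∈ S.erase a) :
        ((pathColorCount S t (-a) b ^ 1 * pathColorCount S t a b ^ (n - 1) : ℕ) : ℤ) =
          (γ + if -a = b then (-1) ^ t else 0) * γ ^ (n - 1) := by
      obtain ⟨hba, hb⟩ := mem_erase.mp hb
      push_cast
      rw [pathColorCount_eq t (hS a ha) hb, pathColorCount_eq t ha hb, if_neg hba.symm]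
      ring
    rw [sum_congr rfl summand, ← sum_mul, sum_erase_add_ite_eq ha]
    by_cases ha0 : a = 0
    · simp [ha0]
    · have : -a ∈ S.erase a := mem_erase.mpr ⟨by omega, hS a ha⟩
      simp only [this, if_true, Ne.symm ha0, if_false]
      ring
  rw [card_properColoring_book_sigmaL S hn, Nat.cast_sum, sum_congr rfl fun a ha => by
    rw [Nat.cast_sum, inner a ha], ← sum_mul, sum_add_distrib, sum_const, sum_ite_eq, if_pos h0,
    nsmul_eq_mul]
  have hγ := mul_gammaP (m := t + 3) (by omega) (#S : ℤ)
  rw [show t + 3 - 1 = t + 2 by omega] at hγ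
  linear_combination (#S - 1 : ℤ) * γ ^ (n - 1) * hγ

end Book

/-- The number of proper colorings of the signed book graph `(B(m,n), σ_1)` with color
set `{-k, …, -1, 0, 1, …, k}` is `(2k)^m · γ_m(2k+1)^{n-1}`. -/
theorem statement10 (m n : ℕ) (hm : 3 ≤ m) (hn : 1 ≤ n) (k : ℕ) :
    (Nat.card {c : BookVertex m n → ℤ //
        (∀ x, |c x| ≤ (k : ℤ)) ∧
        ∀ x y, bookAdj m n x y → c x ≠ sigmaL m n 1 x y * c y} : ℤ) =
      (2 * (k : ℤ)) ^ m * gammaP m (2 * (k : ℤ) + 1) ^ (n - 1) := by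
  obtain ⟨t, rfl⟩ : ∃ t, m = t + 3 := ⟨m - 3, by omega⟩
  have hcard : (#(Icc (-(k : ℤ)) k) : ℤ) = 2 * k + 1 := by
    rw [Int.card_Icc]; omega
  simp_rw [abs_le, ← mem_Icc]
  rw [card_properColoring_book_sigmaL_one (fun z hz => by rw [mem_Icc] at hz ⊢; omega)
    (by simp) hn, hcard]
  ring
end
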